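/- arXiv:1303.6790 — 8 statements merged into one kernel-verified Lean document; each statement's English description precedes it below -/
import Mathlib

section
/- A lattice triangle in R^2 has simplex area 1 (i.e., Euclidean area 1/2) if and only if the only lattice points contained in the closed triangle are its three vertices. -/
noncomputable section

/-- The inclusion of the lattice `ℤ²` into `ℝ²`. -/
def latticeEmbed : ℤ × ℤ → ℝ × ℝ := fun p => ((p.1 : ℝ), (p.2 : ℝ))

/-- Twice the signed area of the lattice triangle `p q r`. -/
def det2 (p q r : ℤ × ℤ) : ℤ :=
  (q.1 - p.1) * (r.2 - p.2) - (q.2 - p.2) * (r.1 - p.1)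

lemma exists_nonspan (v1 v2 w1 w2 d : ℤ) (hd : d = v1*w2 - v2*w1) (h2 : 2 ≤ d.natAbs) :
    ∃ g1 g2 : ℤ, ∀ m n : ℤ, ¬(g1 = m*v1 + n*w1 ∧ g2 = m*v2 + n*w2) := by
  by_contra h
  push_neg at h
  obtain ⟨m1, n1, he1, he2⟩ := h 1 0
  obtain ⟨m2, n2, he3, he4⟩ := h 0 1
  have key : (m1*n2 - n1*m2) * d = 1 := by
    rw [hd]
    linear_combination (-(m2*v2+n2*w2)) * he1 - he4 + (m2*v1+n2*w1) * he2
  have hdvd : d ∣ 1 := ⟨m1*n2 - n1*m2, by rw [← key]; ring⟩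
  have := Int.natAbs_dvd_natAbs.mpr hdvd
  simp at this
  omega

lemma reduce (v1 v2 w1 w2 g1 g2 d D ε : ℤ) (hd : d = v1*w2 - v2*w1)
    (hε : ε*ε = 1) (hD : d = ε*D) (hD2 : 2 ≤ D)
    (hg : ∀ m n : ℤ, ¬(g1 = m*v1 + n*w1 ∧ g2 = m*v2 + n*w2)) :
    ∃ a b u1 u2 : ℤ, 0 ≤ a ∧ 0 ≤ b ∧ a < D ∧ b < D ∧ a + b ≤ D ∧ ¬(a = 0 ∧ b = 0) ∧
      D*u1 = a*v1 + b*w1 ∧ D*u2 = a*v2 + b*w2 := by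
  have hDne : D ≠ 0 := by omega
  have hDpos : 0 < D := by omega
  have hεd : ε*d = D := by linear_combination ε*hD + D*hε
  set A0 : ℤ := g1*w2 - g2*w1 with hA0
  set B0 : ℤ := v1*g2 - v2*g1 with hB0
  set m0 : ℤ := (ε*A0) / D with hm0
  set a0 : ℤ := (ε*A0) % D with ha0
  set n0 : ℤ := (ε*B0) / D with hn0
  set b0 : ℤ := (ε*B0) % D with hb0
  have ha0nn : 0 ≤ a0 := Int.emod_nonneg _ hDne
  have ha0lt : a0 < D := Int.emod_lt_of_pos _ hDpos
  have hb0nn : 0 ≤ b0 := Int.emod_nonneg _ hDne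
  have hb0lt : b0 < D := Int.emod_lt_of_pos _ hDpos
  have hdivA : ε*A0 = D*m0 + a0 := (Int.mul_ediv_add_emod _ _).symm
  have hdivB : ε*B0 = D*n0 + b0 := (Int.mul_ediv_add_emod _ _).symm
  have hAid1 : d*g1 = A0*v1 + B0*w1 := by rw [hA0, hB0, hd]; ring
  have hAid2 : d*g2 = A0*v2 + B0*w2 := by rw [hA0, hB0, hd]; ring
  have hDg1 : D*g1 = (D*m0+a0)*v1 + (D*n0+b0)*w1 := by
    rw [← hdivA, ← hdivB]; linear_combination ε*hAid1 - g1*hεd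
  have hDg2 : D*g2 = (D*m0+a0)*v2 + (D*n0+b0)*w2 := by
    rw [← hdivA, ← hdivB]; linear_combination ε*hAid2 - g2*hεd
  have hne : ¬(a0 = 0 ∧ b0 = 0) := by
    rintro ⟨h1, h2⟩
    rw [h1] at hDg1 hDg2
    rw [h2] at hDg1 hDg2
    exact hg m0 n0 ⟨mul_left_cancel₀ hDne (by linarith [hDg1]),
      mul_left_cancel₀ hDne (by linarith [hDg2])⟩
  rcases le_or_gt (a0 + b0) D with hcase | hcase
  · exact ⟨a0, b0, g1 - m0*v1 - n0*w1, g2 - m0*v2 - n0*w2, ha0nn, hb0nn, ha0lt, hb0lt,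
      hcase, hne, by linear_combination hDg1, by linear_combination hDg2⟩
  · have ha0pos : 0 < a0 := by omega
    have hb0pos : 0 < b0 := by omega
    exact ⟨D - a0, D - b0, (m0+1)*v1 + (n0+1)*w1 - g1, (m0+1)*v2 + (n0+1)*w2 - g2,
      by omega, by omega, by omega, by omega, by omega, by omega,
      by linear_combination -hDg1, by linear_combination -hDg2⟩
lemma mem_triangle (A B C x : ℝ × ℝ) :
    x ∈ convexHull ℝ {A, B, C} ↔
    ∃ a b c : ℝ, 0 ≤ a ∧ 0 ≤ b ∧ 0 ≤ c ∧ a + b + c = 1 ∧ a • A + b • B + c • C = x := by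
  rw [convexHull_insert (by simp : ({B,C} : Set (ℝ×ℝ)).Nonempty), convexHull_pair]
  constructor
  · rintro h
    rw [mem_convexJoin] at h
    obtain ⟨a', ha', z, hz, hx⟩ := h
    simp only [Set.mem_singleton_iff] at ha'
    subst ha'
    obtain ⟨u, v, hu, hv, huv, rfl⟩ := hz
    obtain ⟨s, t, hs, ht, hst, rfl⟩ := hx
    refine ⟨s, t*u, t*v, hs, by positivity, by positivity, by nlinarith, ?_⟩
    module
  · rintro ⟨a, b, c, ha, hb, hc, habc, rfl⟩
    rw [mem_convexJoin]
    rcases eq_or_lt_of_le (by linarith : (0:ℝ) ≤ b + c) with h0 | h0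
    · refine ⟨A, rfl, B, ⟨1, 0, by norm_num⟩, a, 0, ha, le_refl _, by linarith, ?_⟩
      have hb0 : b = 0 := by linarith
      have hc0 : c = 0 := by linarith
      rw [hb0, hc0]; module
    · refine ⟨A, rfl, (b/(b+c)) • B + (c/(b+c)) • C,
        ⟨b/(b+c), c/(b+c), by positivity, by positivity, by field_simp, rfl⟩,
        a, b + c, ha, le_of_lt h0, by linarith, ?_⟩
      rw [smul_add, smul_smul, smul_smul]
      rw [mul_div_cancel₀ _ (ne_of_gt h0), mul_div_cancel₀ _ (ne_of_gt h0)]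
      module

/-- a (nondegenerate) lattice triangle has simplex area 1 (Euclidean area
`1/2`) if and only if the only lattice points in the closed triangle are its three
vertices. -/
theorem stmt4 (p q r : ℤ × ℤ) (hnd : det2 p q r ≠ 0) :
    (det2 p q r).natAbs = 1 ↔
      {z : ℤ × ℤ | latticeEmbed z ∈
          convexHull ℝ {latticeEmbed p, latticeEmbed q, latticeEmbed r}} = {p, q, r} := by
  constructor
  · intro h1
    ext z
    simp only [Set.mem_setOf_eq, Set.mem_insert_iff, Set.mem_singleton_iff]
    constructor
    · intro hz
      rw [mem_triangle] at hz
      obtain ⟨a, b, c, ha, hb, hc, habc, hcomb⟩ := hz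
      have h1c := congrArg Prod.fst hcomb
      have h2c := congrArg Prod.snd hcomb
      simp only [latticeEmbed, Prod.fst_add, Prod.snd_add, Prod.smul_mk, smul_eq_mul] at h1c h2c
      have ha' : a = 1 - b - c := by linarith
      subst ha'
      have hdd : (det2 p q r : ℝ) * (det2 p q r : ℝ) = 1 := by
        have : det2 p q r = 1 ∨ det2 p q r = -1 := by omega
        rcases this with h | h <;> rw [h] <;> norm_num
      have hb1 : b * (det2 p q r : ℝ) =
          ((z.1:ℝ) - p.1)*((r.2:ℝ) - p.2) - ((z.2:ℝ) - p.2)*((r.1:ℝ) - p.1) := by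
        unfold det2
        push_cast
        linear_combination ((r.2:ℝ) - p.2)*h1c - ((r.1:ℝ) - p.1)*h2c
      have hc1 : c * (det2 p q r : ℝ) =
          ((q.1:ℝ) - p.1)*((z.2:ℝ) - p.2) - ((q.2:ℝ) - p.2)*((z.1:ℝ) - p.1) := by
        unfold det2
        push_cast
        linear_combination ((q.1:ℝ) - p.1)*h2c - ((q.2:ℝ) - p.2)*h1c
      set m : ℤ := ((z.1 - p.1)*(r.2 - p.2) - (z.2 - p.2)*(r.1 - p.1)) * det2 p q r with hm
      set n : ℤ := ((q.1 - p.1)*(z.2 - p.2) - (q.2 - p.2)*(z.1 - p.1)) * det2 p q r with hn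
      have hmb : (m:ℝ) = b := by
        rw [hm]; push_cast
        linear_combination b*hdd - (det2 p q r : ℝ)*hb1
      have hnc : (n:ℝ) = c := by
        rw [hn]; push_cast
        linear_combination c*hdd - (det2 p q r : ℝ)*hc1
      have hm0 : 0 ≤ m := by exact_mod_cast hmb ▸ hb
      have hn0 : 0 ≤ n := by exact_mod_cast hnc ▸ hc
      have hmn : m + n ≤ 1 := by
        have : (m:ℝ) + n ≤ 1 := by rw [hmb, hnc]; linarith
        exact_mod_cast this
      have hcases : (m = 0 ∧ n = 0) ∨ (m = 1 ∧ n = 0) ∨ (m = 0 ∧ n = 1) := by omega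
      rcases hcases with ⟨hm1, hn1⟩ | ⟨hm1, hn1⟩ | ⟨hm1, hn1⟩ <;>
        [left; (right; left); (right; right)] <;>
      · have hbv : b = ((m:ℤ):ℝ) := hmb.symm
        have hcv : c = ((n:ℤ):ℝ) := hnc.symm
        rw [hm1] at hbv
        rw [hn1] at hcv
        rw [hbv, hcv] at h1c h2c
        norm_num at h1c h2c
        exact Prod.ext_iff.mpr ⟨by exact_mod_cast h1c.symm, by exact_mod_cast h2c.symm⟩
    · intro hz
      rcases hz with rfl | rfl | rfl
      · exact subset_convexHull ℝ _ (by simp)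
      · exact subset_convexHull ℝ _ (by simp)
      · exact subset_convexHull ℝ _ (by simp)
  · intro hset
    by_contra hne1
    have hD2 : 2 ≤ (det2 p q r).natAbs := by
      have := Int.natAbs_ne_zero.mpr hnd
      omega
    obtain ⟨g1, g2, hg⟩ := exists_nonspan (q.1 - p.1) (q.2 - p.2) (r.1 - p.1) (r.2 - p.2)
      (det2 p q r) rfl hD2
    set D : ℤ := ((det2 p q r).natAbs : ℤ) with hDdef
    obtain ⟨ε, hε, hεD⟩ : ∃ ε : ℤ, ε*ε = 1 ∧ det2 p q r = ε * D := by
      rcases Int.natAbs_eq (det2 p q r) with h | h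
      · exact ⟨1, by ring, by rw [h]; ring⟩
      · exact ⟨-1, by ring, by rw [h]; ring⟩
    have hD2' : 2 ≤ D := by omega
    obtain ⟨a, b, u1, u2, ha, hb, haD, hbD, hab, hne0, hDu1, hDu2⟩ :=
      reduce (q.1 - p.1) (q.2 - p.2) (r.1 - p.1) (r.2 - p.2) g1 g2
      (det2 p q r) D ε rfl hε hεD hD2' hg
    set z : ℤ × ℤ := (p.1 + u1, p.2 + u2) with hzdef
    have hDrpos : (0:ℝ) < (D:ℝ) := by exact_mod_cast hD2'.trans_lt' (by norm_num)
    have hDrne : (D:ℝ) ≠ 0 := ne_of_gt hDrpos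
    have hzmem : z ∈ {z : ℤ × ℤ | latticeEmbed z ∈
          convexHull ℝ {latticeEmbed p, latticeEmbed q, latticeEmbed r}} := by
      simp only [Set.mem_setOf_eq]
      rw [mem_triangle]
      refine ⟨((D:ℝ) - a - b)/D, (a:ℝ)/D, (b:ℝ)/D, ?_, ?_, ?_, ?_, ?_⟩
      · apply div_nonneg _ (le_of_lt hDrpos)
        have : (a:ℝ) + b ≤ D := by exact_mod_cast hab
        linarith
      · positivity
      · positivity
      · field_simp
        ring
      · have hc1 : ((D:ℝ))*(u1:ℝ) = (a:ℝ)*((q.1:ℝ) - p.1) + (b:ℝ)*((r.1:ℝ) - p.1) := by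
          have : ((D*u1 : ℤ) : ℝ) = ((a*(q.1 - p.1) + b*(r.1 - p.1) : ℤ) : ℝ) := by
            exact_mod_cast congrArg (fun x : ℤ => (x:ℝ)) hDu1
          push_cast at this
          linarith
        have hc2 : ((D:ℝ))*(u2:ℝ) = (a:ℝ)*((q.2:ℝ) - p.2) + (b:ℝ)*((r.2:ℝ) - p.2) := by
          have : ((D*u2 : ℤ) : ℝ) = ((a*(q.2 - p.2) + b*(r.2 - p.2) : ℤ) : ℝ) := by
            exact_mod_cast congrArg (fun x : ℤ => (x:ℝ)) hDu2
          push_cast at this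
          linarith
        apply Prod.ext_iff.mpr
        constructor
        · simp only [latticeEmbed, Prod.fst_add, Prod.smul_mk, smul_eq_mul, hzdef]
          push_cast
          field_simp
          linear_combination -hc1
        · simp only [latticeEmbed, Prod.snd_add, Prod.smul_mk, smul_eq_mul, hzdef]
          push_cast
          field_simp
          linear_combination -hc2
    rw [hset] at hzmem
    simp only [Set.mem_insert_iff, Set.mem_singleton_iff] at hzmem
    rcases hzmem with h | h | h
    · have e1 : u1 = 0 := by have := congrArg Prod.fst h; simp [hzdef] at this; omega
      have e2 : u2 = 0 := by have := congrArg Prod.snd h; simp [hzdef] at this; omega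
      rw [e1] at hDu1
      rw [e2] at hDu2
      have had : a * det2 p q r = 0 := by
        unfold det2
        linear_combination ((r.1:ℤ) - p.1)*hDu2 - ((r.2:ℤ) - p.2)*hDu1
      have hbd : b * det2 p q r = 0 := by
        unfold det2
        linear_combination ((q.2:ℤ) - p.2)*hDu1 - ((q.1:ℤ) - p.1)*hDu2
      have ha0 : a = 0 := by
        rcases mul_eq_zero.mp had with h' | h'
        · exact h'
        · exact absurd h' hnd
      have hb0 : b = 0 := by
        rcases mul_eq_zero.mp hbd with h' | h'
        · exact h'
        · exact absurd h' hnd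
      exact hne0 ⟨ha0, hb0⟩
    · have e1 : u1 = q.1 - p.1 := by have := congrArg Prod.fst h; simp [hzdef] at this; omega
      have e2 : u2 = q.2 - p.2 := by have := congrArg Prod.snd h; simp [hzdef] at this; omega
      rw [e1] at hDu1
      rw [e2] at hDu2
      have had : (D - a) * det2 p q r = 0 := by
        unfold det2
        linear_combination ((r.2:ℤ) - p.2)*hDu1 - ((r.1:ℤ) - p.1)*hDu2
      rcases mul_eq_zero.mp had with h' | h'
      · omega
      · exact hnd h'
    · have e1 : u1 = r.1 - p.1 := by have := congrArg Prod.fst h; simp [hzdef] at this; omega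
      have e2 : u2 = r.2 - p.2 := by have := congrArg Prod.snd h; simp [hzdef] at this; omega
      rw [e1] at hDu1
      rw [e2] at hDu2
      have hbd : (D - b) * det2 p q r = 0 := by
        unfold det2
        linear_combination ((q.1:ℤ) - p.1)*hDu2 - ((q.2:ℤ) - p.2)*hDu1
      rcases mul_eq_zero.mp hbd with h' | h'
      · omega
      · exact hnd h'
end
end

section
/- There is no convex lattice pentagon v_0 v_1 v_2 v_3 v_4 (vertices in counterclockwise order, all in Z^2) such that every triangle with vertices v_i, v_{i+1}, v_{i+2} (indices mod 5) has simplex area 1. Equivalently, in any convex lattice pentagon with exactly 5 boundary lattice points, some triangle v_i v_{i+1} v_{i+2} contains a lattice point other than its vertices. -/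
noncomputable section

lemma evenL1 (p q r : ℤ × ℤ) (hd : det2 p q r = 1)
    (h1 : (2:ℤ) ∣ q.1 - p.1) (h2 : (2:ℤ) ∣ q.2 - p.2) : False := by
  obtain ⟨a, ha⟩ := h1; obtain ⟨b, hb⟩ := h2
  have : (2:ℤ) ∣ det2 p q r :=
    ⟨a * (r.2 - p.2) - b * (r.1 - p.1), by
      unfold det2; linear_combination (r.2 - p.2) * ha - (r.1 - p.1) * hb⟩
  omega

lemma evenL2 (p q r : ℤ × ℤ) (hd : det2 p q r = 1)
    (h1 : (2:ℤ) ∣ r.1 - p.1) (h2 : (2:ℤ) ∣ r.2 - p.2) : False := by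
  obtain ⟨a, ha⟩ := h1; obtain ⟨b, hb⟩ := h2
  have : (2:ℤ) ∣ det2 p q r :=
    ⟨(q.1 - p.1) * b - (q.2 - p.2) * a, by
      unfold det2; linear_combination (q.1 - p.1) * hb - (q.2 - p.2) * ha⟩
  omega

/-- there is no convex lattice pentagon `v 0, …, v 4` (vertices in
counterclockwise order: every vertex `v j` lies strictly to the left of each directed
edge `v i → v (i+1)`) in which every consecutive triangle `v i, v (i+1), v (i+2)` has
simplex area 1. -/
theorem stmt8 (v : Fin 5 → ℤ × ℤ)
    (hconv : ∀ i j : Fin 5, j ≠ i → j ≠ i + 1 → 0 < det2 (v i) (v (i + 1)) (v j)) :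
    ¬ ∀ i : Fin 5, det2 (v i) (v (i + 1)) (v (i + 2)) = 1 := by
  intro h
  have h0 := h 0
  have h1 := h 1
  have h2 := h 2
  have h3 := h 3
  have h4 := h 4
  have hni : ¬ Function.Injective
      (fun i : Fin 5 => (((v i).1 : ZMod 2), ((v i).2 : ZMod 2))) := by
    intro hf
    have := Fintype.card_le_of_injective _ hf
    simp at this
  rw [Function.not_injective_iff] at hni
  obtain ⟨i, j, hfij, hij⟩ := hni
  have e1 : ((v i).1 : ZMod 2) = ((v j).1 : ZMod 2) := congrArg Prod.fst hfij
  have e2 : ((v i).2 : ZMod 2) = ((v j).2 : ZMod 2) := congrArg Prod.snd hfij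
  have d1 : (2:ℤ) ∣ (v i).1 - (v j).1 :=
    ((ZMod.intCast_eq_intCast_iff _ _ _).mp e1).symm.dvd
  have d2 : (2:ℤ) ∣ (v i).2 - (v j).2 :=
    ((ZMod.intCast_eq_intCast_iff _ _ _).mp e2).symm.dvd
  have d1' : (2:ℤ) ∣ (v j).1 - (v i).1 := by omega
  have d2' : (2:ℤ) ∣ (v j).2 - (v i).2 := by omega
  fin_cases i <;> fin_cases j <;>
    first
      | exact hij rfl
      | exact evenL1 _ _ _ h0 d1 d2 | exact evenL1 _ _ _ h0 d1' d2'
      | exact evenL2 _ _ _ h0 d1 d2 | exact evenL2 _ _ _ h0 d1' d2'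
      | exact evenL1 _ _ _ h1 d1 d2 | exact evenL1 _ _ _ h1 d1' d2'
      | exact evenL2 _ _ _ h1 d1 d2 | exact evenL2 _ _ _ h1 d1' d2'
      | exact evenL1 _ _ _ h2 d1 d2 | exact evenL1 _ _ _ h2 d1' d2'
      | exact evenL2 _ _ _ h2 d1 d2 | exact evenL2 _ _ _ h2 d1' d2'
      | exact evenL1 _ _ _ h3 d1 d2 | exact evenL1 _ _ _ h3 d1' d2'
      | exact evenL2 _ _ _ h3 d1 d2 | exact evenL2 _ _ _ h3 d1' d2'
      | exact evenL1 _ _ _ h4 d1 d2 | exact evenL1 _ _ _ h4 d1' d2'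
      | exact evenL2 _ _ _ h4 d1 d2 | exact evenL2 _ _ _ h4 d1' d2'
end
end

section
/- Let P be a lattice triangle whose boundary contains exactly 5 lattice points and which has at least 4 interior lattice points. Then one edge of P has discrete length 3 and the other two edges have discrete length 1; in particular, P is lattice-isomorphic to a triangle with vertices (0,0), (3,0), (c,d) where d > 0 and gcd(c,d) = gcd(c-3,d) = 1. -/
/-!
The lattice points on an edge `[u, v]` are `u + k • w` for `0 ≤ k ≤ g`, where `g` is the gcd of
the coordinates of `v - u` (the edge's discrete length) and `w = (v - u) / g`; since the edges of a
nondegenerate triangle meet only at the vertices, the boundary carries `g₁ + g₂ + g₃ = 5` lattice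
points. An edge has even length iff its edge vector lies in `2ℤ²`, and the three edge vectors sum
to zero, so two even edges force the third to be even. This excludes the lengths `(2, 2, 1)` and
leaves `(3, 1, 1)`. A unimodular map whose first row is a Bézout vector of the primitive direction
of the long edge sends that edge to `[(0, 0), (3, 0)]`; composing with a reflection puts the third
vertex `(c, d)` above the axis, and `gcd(c, d) = gcd(c - 3, d) = 1` because unimodular maps preserve
discrete lengths.
-/

noncomputable section

/-- The closed triangle in `ℝ²` with the given lattice vertices. -/
def triZ (u v w : ℤ × ℤ) : Set (ℝ × ℝ) :=
  convexHull ℝ {latticeEmbed u, latticeEmbed v, latticeEmbed w}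

open Set

section

variable {ι E : Type*} [AddCommGroup E] [Module ℝ E]

lemma AffineBasis.coord_eq_zero_of_mem_segment (b : AffineBasis ι ℝ E) {i j k : ι}
    (hj : i ≠ j) (hk : i ≠ k) {x : E} (hx : x ∈ segment ℝ (b j) (b k)) : b.coord i x = 0 := by
  have := mem_image_of_mem (b.coord i) hx
  rwa [image_segment, b.coord_apply_ne hj, b.coord_apply_ne hk, segment_same,
    mem_singleton_iff] at this

lemma AffineBasis.mem_segment_of_coord_eq_zero [Fintype ι] (b : AffineBasis ι ℝ E) {j k : ι}
    (hjk : j ≠ k) {x : E} (hx : ∀ i, 0 ≤ b.coord i x)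
    (h0 : ∀ i, i ≠ j → i ≠ k → b.coord i x = 0) : x ∈ segment ℝ (b j) (b k) := by
  classical
  have hsum := b.sum_coord_apply_eq_one x
  have hrep := b.linear_combination_coord_eq_self x
  rw [Finset.sum_eq_add j k hjk (fun i _ hi => h0 i hi.1 hi.2) (by simp) (by simp)] at hsum
  rw [Finset.sum_eq_add j k hjk (fun i _ hi => by simp [h0 i hi.1 hi.2]) (by simp) (by simp)]
    at hrep
  exact ⟨_, _, hx j, hx k, hsum, hrep⟩

end

section

variable {E : Type*} [NormedAddCommGroup E] [NormedSpace ℝ E] [FiniteDimensional ℝ E]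

lemma frontier_convexHull_triple (hE : Module.finrank ℝ E = 2) {A B C : E}
    (h : AffineIndependent ℝ ![A, B, C]) :
    frontier (convexHull ℝ {A, B, C}) = segment ℝ A B ∪ segment ℝ B C ∪ segment ℝ C A := by
  let b : AffineBasis (Fin 3) ℝ E :=
    ⟨![A, B, C], h, h.affineSpan_eq_top_iff_card_eq_finrank_add_one.mpr (by simp [hE])⟩
  have hb : (b : Fin 3 → E) = ![A, B, C] := rfl
  have hrange : range b = {A, B, C} := by
    rw [hb, Matrix.range_cons, Matrix.range_cons_cons_empty, singleton_union]
  rw [((toFinite _).isClosed_convexHull (𝕜 := ℝ)).frontier_eq, ← hrange, b.interior_convexHull,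
    b.convexHull_eq_nonneg_coord]
  ext x
  simp only [mem_sdiff, mem_ofPred_eq, not_forall, not_lt, mem_union]
  constructor
  · rintro ⟨hx, i, hi⟩
    have hi0 : b.coord i x = 0 := le_antisymm hi (hx i)
    fin_cases i
    · exact Or.inl (Or.inr (b.mem_segment_of_coord_eq_zero (j := 1) (k := 2) (by decide) hx
        (fun l h1 h2 => by fin_cases l <;> simp_all)))
    · exact Or.inr (b.mem_segment_of_coord_eq_zero (j := 2) (k := 0) (by decide) hx
        (fun l h1 h2 => by fin_cases l <;> simp_all))
    · exact Or.inl (Or.inl (b.mem_segment_of_coord_eq_zero (j := 0) (k := 1) (by decide) hx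
        (fun l h1 h2 => by fin_cases l <;> simp_all)))
  · have key : ∀ i j k, i ≠ j → i ≠ k → x ∈ segment ℝ (b j) (b k) →
        (∀ l, 0 ≤ b.coord l x) ∧ ∃ l, b.coord l x ≤ 0 := fun i j k hj hk hx => by
      have hhull := segment_subset_convexHull (mem_range_self j) (mem_range_self k) hx
      rw [b.convexHull_eq_nonneg_coord] at hhull
      exact ⟨hhull, i, (b.coord_eq_zero_of_mem_segment hj hk hx).le⟩
    rintro ((hx | hx) | hx)
    · exact key 2 0 1 (by decide) (by decide) hx
    · exact key 0 1 2 (by decide) (by decide) hx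
    · exact key 1 2 0 (by decide) (by decide) hx

end

def latticeLength (u v : ℤ × ℤ) : ℕ := Int.gcd (v.1 - u.1) (v.2 - u.2)

def latticeSegment (u v : ℤ × ℤ) : Set (ℤ × ℤ) :=
  {z | latticeEmbed z ∈ segment ℝ (latticeEmbed u) (latticeEmbed v)}

lemma latticeEmbed_injective : Function.Injective latticeEmbed := by
  intro z z' h
  simp only [latticeEmbed, Prod.mk.injEq, Int.cast_inj] at h
  exact Prod.ext h.1 h.2

@[simp]
lemma latticeEmbed_add_smul (u w : ℤ × ℤ) (k : ℤ) :
    latticeEmbed (u + k • w) = latticeEmbed u + (k : ℝ) • latticeEmbed w := by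
  simp [latticeEmbed]

lemma latticeLength_comm (u v : ℤ × ℤ) : latticeLength u v = latticeLength v u := by
  rw [latticeLength, latticeLength, ← Int.gcd_neg, ← Int.neg_gcd]
  simp

lemma exists_primitive_eq_smul (d : ℤ × ℤ) :
    ∃ w : ℤ × ℤ, Int.gcd w.1 w.2 = 1 ∧ d = (Int.gcd d.1 d.2 : ℤ) • w := by
  rcases (Nat.eq_zero_or_pos (Int.gcd d.1 d.2)) with h0 | hpos
  · refine ⟨(1, 0), by simp, ?_⟩
    rw [Int.gcd_eq_zero_iff] at h0
    simp [h0, Prod.ext_iff]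
  · obtain ⟨g, w1, w2, -, hw, h1, h2⟩ := Int.exists_gcd_one' hpos
    refine ⟨(w1, w2), hw, ?_⟩
    rw [h1, h2, Int.gcd_mul_right, hw, Int.natAbs_natCast, one_mul]
    ext <;> simp [h1, h2, mul_comm]

lemma exists_eq_add_latticeLength_smul (u v : ℤ × ℤ) :
    ∃ w : ℤ × ℤ, Int.gcd w.1 w.2 = 1 ∧ v = u + (latticeLength u v : ℤ) • w := by
  obtain ⟨w, hw, hvu⟩ := exists_primitive_eq_smul (v - u)
  exact ⟨w, hw, by rw [latticeLength, ← Prod.fst_sub, ← Prod.snd_sub, ← hvu]; abel⟩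

lemma latticeSegment_add_smul (u w : ℤ × ℤ) (hw : Int.gcd w.1 w.2 = 1) (n : ℕ) :
    latticeSegment u (u + (n : ℤ) • w) = (fun k : ℤ => u + k • w) '' Icc 0 (n : ℤ) := by
  ext z
  simp only [latticeSegment, mem_ofPred_eq, segment_eq_image', latticeEmbed_add_smul,
    add_sub_cancel_left, mem_image, mem_Icc]
  constructor
  · rintro ⟨θ, ⟨hθ0, hθ1⟩, hz⟩
    -- `z - u` is a real multiple of the primitive vector `w`; pairing it with a Bézout vector
    -- of `w` recovers that multiple as an integer
    set k : ℤ := (z - u).1 * Int.gcdA w.1 w.2 + (z - u).2 * Int.gcdB w.1 w.2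
    have hbez : (w.1 * Int.gcdA w.1 w.2 + w.2 * Int.gcdB w.1 w.2 : ℝ) = 1 := by
      exact_mod_cast (Int.gcd_eq_gcd_ab w.1 w.2).symm.trans (by rw [hw]; rfl)
    simp only [latticeEmbed, Int.cast_natCast, Prod.smul_mk, smul_eq_mul, Prod.mk_add_mk,
      Prod.mk.injEq] at hz
    have hk : (k : ℝ) = θ * n := by
      simp only [k, Prod.fst_sub, Prod.snd_sub]
      push_cast
      rw [← hz.1, ← hz.2]
      linear_combination θ * n * hbez
    refine ⟨k, ⟨?_, ?_⟩, ?_⟩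
    · have : (0 : ℝ) ≤ k := hk ▸ by positivity
      exact_mod_cast this
    · have : (k : ℝ) ≤ n := hk ▸ mul_le_of_le_one_left (Nat.cast_nonneg n) hθ1
      exact_mod_cast this
    · apply latticeEmbed_injective
      rw [latticeEmbed_add_smul, hk]
      ext <;> simp only [latticeEmbed, Prod.smul_mk, smul_eq_mul, Prod.mk_add_mk] <;>
        linarith [hz.1, hz.2]
  · rintro ⟨k, ⟨hk0, hkn⟩, rfl⟩
    refine ⟨k / n, ⟨by positivity, div_le_one_of_le₀ (by exact_mod_cast hkn) (by positivity)⟩, ?_⟩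
    rcases Nat.eq_zero_or_pos n with rfl | hn
    · obtain rfl : k = 0 := by omega
      simp
    · rw [smul_smul, Int.cast_natCast, div_mul_cancel₀ _ (by positivity), latticeEmbed_add_smul]

lemma latticeSegment_eq_image (u v : ℤ × ℤ) : ∃ w : ℤ × ℤ, Int.gcd w.1 w.2 = 1 ∧
    latticeSegment u v = (fun k : ℤ => u + k • w) '' Icc 0 (latticeLength u v : ℤ) := by
  obtain ⟨w, hw, hv⟩ := exists_eq_add_latticeLength_smul u v
  exact ⟨w, hw, by rw [← latticeSegment_add_smul u w hw, ← hv]⟩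

lemma latticeSegment_finite (u v : ℤ × ℤ) : (latticeSegment u v).Finite := by
  obtain ⟨w, -, h⟩ := latticeSegment_eq_image u v
  exact h ▸ (finite_Icc _ _).image _

lemma latticeSegment_ncard (u v : ℤ × ℤ) :
    (latticeSegment u v).ncard = latticeLength u v + 1 := by
  obtain ⟨w, hw, h⟩ := latticeSegment_eq_image u v
  have hw0 : w ≠ 0 := by rintro rfl; simp at hw
  have hinj : Function.Injective fun k : ℤ => u + k • w := fun k l hkl =>
    smul_left_injective ℤ hw0 (add_left_cancel hkl)
  rw [h, ncard_image_of_injective _ hinj, ← Finset.coe_Icc, ncard_coe_finset, Int.card_Icc]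
  omega

lemma det2_eq_zero_of_mem_latticeSegment {u v z : ℤ × ℤ} (hz : z ∈ latticeSegment u v) :
    det2 u v z = 0 := by
  obtain ⟨w, hw, hv⟩ := exists_eq_add_latticeLength_smul u v
  rw [hv, latticeSegment_add_smul u w hw] at hz
  obtain ⟨k, -, rfl⟩ := hz
  rw [hv]
  simp only [det2, Prod.fst_add, Prod.snd_add, Prod.smul_fst, Prod.smul_snd, smul_eq_mul]
  ring

lemma det2_rotate (a b c : ℤ × ℤ) : det2 b c a = det2 a b c := by unfold det2; ring

lemma ne_of_det2_ne_zero {a b c : ℤ × ℤ} (h : det2 a b c ≠ 0) : a ≠ b ∧ b ≠ c ∧ c ≠ a := by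
  refine ⟨?_, ?_, ?_⟩ <;> rintro rfl <;> exact h (by unfold det2; ring)

lemma latticeSegment_inter_latticeSegment {a b c : ℤ × ℤ} (h : det2 a b c ≠ 0) :
    latticeSegment a b ∩ latticeSegment b c = {b} := by
  refine eq_singleton_iff_unique_mem.mpr
    ⟨⟨right_mem_segment ℝ _ _, left_mem_segment ℝ _ _⟩, fun z ⟨hab, hbc⟩ => ?_⟩
  have h1 := det2_eq_zero_of_mem_latticeSegment hab
  have h2 := det2_eq_zero_of_mem_latticeSegment hbc
  have e1 : det2 a b c * (z.1 - b.1) = 0 := by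
    unfold det2 at h1 h2 ⊢; linear_combination (c.1 - b.1) * h1 - (b.1 - a.1) * h2
  have e2 : det2 a b c * (z.2 - b.2) = 0 := by
    unfold det2 at h1 h2 ⊢; linear_combination (c.2 - b.2) * h1 - (b.2 - a.2) * h2
  simp only [mul_eq_zero, h, false_or, sub_eq_zero] at e1 e2
  exact Prod.ext e1 e2

lemma affineIndependent_latticeEmbed {a b c : ℤ × ℤ} (h : det2 a b c ≠ 0) :
    AffineIndependent ℝ ![latticeEmbed a, latticeEmbed b, latticeEmbed c] := by
  rw [affineIndependent_iff_not_collinear_set, collinear_iff_of_mem (mem_insert _ _)]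
  rintro ⟨v, hv⟩
  obtain ⟨s, hs⟩ := hv (latticeEmbed b) (by simp)
  obtain ⟨t, ht⟩ := hv (latticeEmbed c) (by simp)
  simp only [latticeEmbed, vadd_eq_add, Prod.ext_iff, Prod.fst_add, Prod.snd_add,
    Prod.smul_fst, Prod.smul_snd, smul_eq_mul] at hs ht
  apply h
  have : (det2 a b c : ℝ) = 0 := by
    simp only [det2]; push_cast
    rw [hs.1, hs.2, ht.1, ht.2]; ring
  exact_mod_cast this

lemma boundary_eq_union_latticeSegment {a b c : ℤ × ℤ} (h : det2 a b c ≠ 0) :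
    {z : ℤ × ℤ | latticeEmbed z ∈ frontier (triZ a b c)} =
      latticeSegment a b ∪ latticeSegment b c ∪ latticeSegment c a := by
  ext z
  rw [mem_ofPred_eq, triZ, frontier_convexHull_triple (by simp) (affineIndependent_latticeEmbed h)]
  rfl

lemma ncard_boundary {a b c : ℤ × ℤ} (h : det2 a b c ≠ 0) :
    {z : ℤ × ℤ | latticeEmbed z ∈ frontier (triZ a b c)}.ncard =
      latticeLength a b + latticeLength b c + latticeLength c a := by
  have hinter : (latticeSegment a b ∪ latticeSegment b c) ∩ latticeSegment c a = {a, c} := by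
    rw [union_inter_distrib_right, inter_comm, latticeSegment_inter_latticeSegment
      (by rwa [det2_rotate, det2_rotate]), latticeSegment_inter_latticeSegment (by rwa [det2_rotate])]
    rw [singleton_union, pair_comm]
  have h123 := ncard_union_add_ncard_inter _ _
    ((latticeSegment_finite a b).union (latticeSegment_finite b c)) (latticeSegment_finite c a)
  have h12 := ncard_union_add_ncard_inter _ _ (latticeSegment_finite a b) (latticeSegment_finite b c)
  rw [hinter, ncard_pair (ne_of_det2_ne_zero h).2.2.symm] at h123
  rw [latticeSegment_inter_latticeSegment h, ncard_singleton] at h12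
  rw [boundary_eq_union_latticeSegment h]
  simp only [latticeSegment_ncard] at h123 h12
  omega

lemma two_dvd_latticeLength_iff (u v : ℤ × ℤ) :
    2 ∣ latticeLength u v ↔ 2 ∣ v.1 - u.1 ∧ 2 ∣ v.2 - u.2 := by
  refine ⟨fun h => ?_, fun h => Int.dvd_gcd h.1 h.2⟩
  have h' : ((2 : ℕ) : ℤ) ∣ Int.gcd (v.1 - u.1) (v.2 - u.2) := Int.natCast_dvd_natCast.mpr h
  exact ⟨h'.trans (Int.gcd_dvd_left _ _), h'.trans (Int.gcd_dvd_right _ _)⟩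

lemma latticeLength_pos {u v : ℤ × ℤ} (h : u ≠ v) : 0 < latticeLength u v := by
  refine Int.gcd_pos_iff.mpr ?_
  by_contra! h0
  exact h (Prod.ext (by omega) (by omega))

lemma exists_rotation_latticeLength_eq_three_one_one {a b c : ℤ × ℤ} (h : det2 a b c ≠ 0)
    (h5 : latticeLength a b + latticeLength b c + latticeLength c a = 5) :
    ∃ p q r : ℤ × ℤ, ({p, q, r} : Set (ℤ × ℤ)) = {a, b, c} ∧ det2 p q r ≠ 0 ∧
      latticeLength p q = 3 ∧ latticeLength q r = 1 ∧ latticeLength r p = 1 := by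
  obtain ⟨hab, hbc, hca⟩ := ne_of_det2_ne_zero h
  have := latticeLength_pos hab
  have := latticeLength_pos hbc
  have := latticeLength_pos hca
  have := two_dvd_latticeLength_iff a b
  have := two_dvd_latticeLength_iff b c
  have := two_dvd_latticeLength_iff c a
  -- if two edges have even length, so does the third; this rules out the lengths (2, 2, 1)
  rcases (by omega : (latticeLength a b = 3 ∧ latticeLength b c = 1 ∧ latticeLength c a = 1) ∨
      (latticeLength b c = 3 ∧ latticeLength c a = 1 ∧ latticeLength a b = 1) ∨
      (latticeLength c a = 3 ∧ latticeLength a b = 1 ∧ latticeLength b c = 1))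
    with hl | hl | hl
  · exact ⟨a, b, c, rfl, h, hl⟩
  · exact ⟨b, c, a, by rw [pair_comm c a, insert_comm b a], by rwa [det2_rotate], hl⟩
  · exact ⟨c, a, b, by rw [insert_comm c a, pair_comm c b], by rwa [det2_rotate, det2_rotate], hl⟩

lemma Int.gcd_unimodular {m11 m12 m21 m22 : ℤ} (hdet : (m11 * m22 - m12 * m21).natAbs = 1)
    (x y : ℤ) : Int.gcd (m11 * x + m12 * y) (m21 * x + m22 * y) = Int.gcd x y := by
  have hunit : IsUnit (m11 * m22 - m12 * m21) := Int.isUnit_iff_natAbs_eq.mpr hdet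
  have hX := Int.gcd_dvd_left (m11 * x + m12 * y) (m21 * x + m22 * y)
  have hY := Int.gcd_dvd_right (m11 * x + m12 * y) (m21 * x + m22 * y)
  apply Nat.dvd_antisymm <;> apply Int.dvd_gcd
  · rw [← hunit.dvd_mul_left, show (m11 * m22 - m12 * m21) * x =
      m22 * (m11 * x + m12 * y) + -m12 * (m21 * x + m22 * y) by ring]
    exact hX.linear_comb hY _ _
  · rw [← hunit.dvd_mul_left, show (m11 * m22 - m12 * m21) * y =
      -m21 * (m11 * x + m12 * y) + m11 * (m21 * x + m22 * y) by ring]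
    exact hX.linear_comb hY _ _
  · exact (Int.gcd_dvd_left x y).linear_comb (Int.gcd_dvd_right x y) _ _
  · exact (Int.gcd_dvd_left x y).linear_comb (Int.gcd_dvd_right x y) _ _

def latticeAffineMap (m11 m12 m21 m22 t1 t2 : ℤ) (z : ℤ × ℤ) : ℤ × ℤ :=
  (m11 * z.1 + m12 * z.2 + t1, m21 * z.1 + m22 * z.2 + t2)

lemma latticeLength_latticeAffineMap {m11 m12 m21 m22 : ℤ}
    (hdet : (m11 * m22 - m12 * m21).natAbs = 1) (t1 t2 : ℤ) (u v : ℤ × ℤ) :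
    latticeLength (latticeAffineMap m11 m12 m21 m22 t1 t2 u)
      (latticeAffineMap m11 m12 m21 m22 t1 t2 v) = latticeLength u v := by
  rw [latticeLength, latticeLength, ← Int.gcd_unimodular hdet (v.1 - u.1)]
  congr 1 <;> simp only [latticeAffineMap] <;> ring

lemma exists_latticeAffineMap_straighten (p w r : ℤ × ℤ) (hw : Int.gcd w.1 w.2 = 1)
    (hr : det2 p (p + w) r ≠ 0) :
    ∃ m11 m12 m21 m22 t1 t2 : ℤ, (m11 * m22 - m12 * m21).natAbs = 1 ∧
      (∀ k : ℤ, latticeAffineMap m11 m12 m21 m22 t1 t2 (p + k • w) = (k, 0)) ∧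
      0 < (latticeAffineMap m11 m12 m21 m22 t1 t2 r).2 := by
  set s := Int.gcdA w.1 w.2
  set t := Int.gcdB w.1 w.2
  have hbez : w.1 * s + w.2 * t = 1 := by
    have := Int.gcd_eq_gcd_ab w.1 w.2
    rwa [hw, Nat.cast_one, eq_comm] at this
  -- the first row is a Bézout vector of `w`, the second row `± (-w.2, w.1)` is orthogonal to `w`,
  -- with the sign chosen to put `r` in the upper half-plane
  set ε := (det2 p (p + w) r).sign
  refine ⟨s, t, -ε * w.2, ε * w.1, -(s * p.1 + t * p.2), ε * (w.2 * p.1 - w.1 * p.2),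
    ?_, fun k => ?_, ?_⟩
  · rw [show s * (ε * w.1) - t * (-ε * w.2) = ε by linear_combination ε * hbez]
    exact Int.natAbs_sign_of_ne_zero hr
  · simp only [latticeAffineMap, Prod.fst_add, Prod.snd_add, Prod.smul_fst, Prod.smul_snd,
      smul_eq_mul, Prod.mk.injEq]
    exact ⟨by linear_combination k * hbez, by ring⟩
  · have : (latticeAffineMap s t (-ε * w.2) (ε * w.1) (-(s * p.1 + t * p.2))
        (ε * (w.2 * p.1 - w.1 * p.2)) r).2 = ε * det2 p (p + w) r := by
      simp only [latticeAffineMap, det2, Prod.fst_add, Prod.snd_add]; ring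
    rw [this, Int.sign_mul_self]
    exact_mod_cast Int.natAbs_pos.mpr hr

lemma exists_latticeAffineMap_image_eq {p q r : ℤ × ℤ} (h : det2 p q r ≠ 0)
    (hpq : latticeLength p q = 3) (hqr : latticeLength q r = 1) (hrp : latticeLength r p = 1) :
    ∃ m11 m12 m21 m22 t1 t2 cc dd : ℤ,
      (m11 * m22 - m12 * m21).natAbs = 1 ∧ 0 < dd ∧
      Int.gcd cc dd = 1 ∧ Int.gcd (cc - 3) dd = 1 ∧
      latticeAffineMap m11 m12 m21 m22 t1 t2 '' {p, q, r} =
        {((0 : ℤ), (0 : ℤ)), ((3 : ℤ), (0 : ℤ)), (cc, dd)} := by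
  obtain ⟨w, hw, hq⟩ := exists_eq_add_latticeLength_smul p q
  rw [hpq, Nat.cast_ofNat] at hq
  have hr : det2 p (p + w) r ≠ 0 := by
    refine fun h0 => h ?_
    rw [hq, show det2 p (p + (3 : ℤ) • w) r = 3 * det2 p (p + w) r by
      simp only [det2, Prod.fst_add, Prod.snd_add, Prod.smul_fst, Prod.smul_snd, smul_eq_mul]
      ring, h0, mul_zero]
  obtain ⟨m11, m12, m21, m22, t1, t2, hdet, hline, hpos⟩ :=
    exists_latticeAffineMap_straighten p w r hw hr
  set φ := latticeAffineMap m11 m12 m21 m22 t1 t2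
  have hp : φ p = (0, 0) := by simpa using hline 0
  have hq' : φ q = (3, 0) := hq ▸ hline 3
  have hpr : latticeLength (φ p) (φ r) = 1 := by
    rw [latticeLength_latticeAffineMap hdet, ← latticeLength_comm, hrp]
  have hqr' : latticeLength (φ q) (φ r) = 1 := by rw [latticeLength_latticeAffineMap hdet, hqr]
  rw [hp] at hpr
  rw [hq'] at hqr'
  refine ⟨m11, m12, m21, m22, t1, t2, (φ r).1, (φ r).2, hdet, hpos,
    by simpa [latticeLength] using hpr, by simpa [latticeLength] using hqr', ?_⟩
  show φ '' {p, q, r} = _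
  rw [image_insert_eq, image_insert_eq, image_singleton, hp, hq']

theorem stmt10_general (a b c : ℤ × ℤ) (hnd : det2 a b c ≠ 0)
    (hb : {z : ℤ × ℤ | latticeEmbed z ∈ frontier (triZ a b c)}.ncard = 5) :
    (∃ p q r : ℤ × ℤ, ({p, q, r} : Set (ℤ × ℤ)) = {a, b, c} ∧
        Int.gcd (q.1 - p.1) (q.2 - p.2) = 3 ∧
        Int.gcd (r.1 - q.1) (r.2 - q.2) = 1 ∧
        Int.gcd (p.1 - r.1) (p.2 - r.2) = 1) ∧
    ∃ m11 m12 m21 m22 t1 t2 cc dd : ℤ,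
      (m11 * m22 - m12 * m21).natAbs = 1 ∧ 0 < dd ∧
      Int.gcd cc dd = 1 ∧ Int.gcd (cc - 3) dd = 1 ∧
      (fun z : ℤ × ℤ => (m11 * z.1 + m12 * z.2 + t1, m21 * z.1 + m22 * z.2 + t2)) ''
          {a, b, c} = {((0 : ℤ), (0 : ℤ)), ((3 : ℤ), (0 : ℤ)), (cc, dd)} := by
  rw [ncard_boundary hnd] at hb
  obtain ⟨p, q, r, hpqr, hnd', hpq, hqr, hrp⟩ :=
    exists_rotation_latticeLength_eq_three_one_one hnd hb
  refine ⟨⟨p, q, r, hpqr, hpq, hqr, hrp⟩, ?_⟩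
  rw [← hpqr]
  exact exists_latticeAffineMap_image_eq hnd' hpq hqr hrp

/-- a lattice triangle with exactly 5 boundary lattice points and at least
4 interior lattice points has one edge of discrete length 3 and two edges of discrete
length 1, and is lattice-isomorphic (via `x ↦ Mx + t`, `M ∈ GL₂(ℤ)`, `t ∈ ℤ²`) to the
triangle with vertices `(0,0)`, `(3,0)`, `(c,d)` where `d > 0` and
`gcd(c,d) = gcd(c-3,d) = 1`. -/
theorem stmt10 (a b c : ℤ × ℤ) (hnd : det2 a b c ≠ 0)
    (hb : {z : ℤ × ℤ | latticeEmbed z ∈ frontier (triZ a b c)}.ncard = 5)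
    (hi : 4 ≤ {z : ℤ × ℤ | latticeEmbed z ∈ interior (triZ a b c)}.ncard) :
    (∃ p q r : ℤ × ℤ, ({p, q, r} : Set (ℤ × ℤ)) = {a, b, c} ∧
        Int.gcd (q.1 - p.1) (q.2 - p.2) = 3 ∧
        Int.gcd (r.1 - q.1) (r.2 - q.2) = 1 ∧
        Int.gcd (p.1 - r.1) (p.2 - r.2) = 1) ∧
    ∃ m11 m12 m21 m22 t1 t2 cc dd : ℤ,
      (m11 * m22 - m12 * m21).natAbs = 1 ∧ 0 < dd ∧
      Int.gcd cc dd = 1 ∧ Int.gcd (cc - 3) dd = 1 ∧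
      (fun z : ℤ × ℤ => (m11 * z.1 + m12 * z.2 + t1, m21 * z.1 + m22 * z.2 + t2)) ''
          {a, b, c} = {((0 : ℤ), (0 : ℤ)), ((3 : ℤ), (0 : ℤ)), (cc, dd)} :=
  stmt10_general a b c hnd hb
end
end

section
/- Let A ⊂ Z^r be a finite set lying in an affine hyperplane with ZA = Z^r, and suppose C(A) = {x ∈ R^r : m_1(x) ≥ 0, ..., m_n(x) ≥ 0} for integral linear forms m_j with coprime coefficients. Let β ∈ R^r be such that m_j(β) ∉ Z for all j. Then the set of apex points, i.e. points p ∈ (β + Z^r) ∩ C(A) with p - a ∉ C(A) for all a ∈ A, depends only on the tuple of integers (⌊m_1(β)⌋, ..., ⌊m_n(β)⌋): if β' satisfies ⌊m_j(β')⌋ = ⌊m_j(β)⌋ for all j, then x + β is an apex point for β if and only if x + β' is an apex point for β', for every x ∈ Z^r. -/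

private lemma stmt12_key (b b' : ℝ) (h : ⌊b⌋ = ⌊b'⌋) (k : ℤ) :
    (0 ≤ (k : ℝ) + b ↔ 0 ≤ (k : ℝ) + b') := by
  have h1 : ∀ c : ℝ, (0 ≤ (k : ℝ) + c) ↔ (-⌊c⌋ ≤ k) := by
    intro c
    have : (0 ≤ (k : ℝ) + c) ↔ (-c ≤ (k : ℝ)) := by constructor <;> intro <;> linarith
    rw [this, ← Int.ceil_le, Int.ceil_neg]
  rw [h1, h1, h]


/-- let `A ⊂ ℤ^r` be a finite set lying in an affine hyperplane with
`ℤA = ℤ^r`, whose nonnegative cone `C(A)` has the H-description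
`{x : ∀ j, m_j(x) ≥ 0}` for integral linear forms `m_j` with coprime coefficients.
If `m_j(β) ∉ ℤ` for all `j`, then the apex points (points `p ∈ (β + ℤ^r) ∩ C(A)` with
`p - a ∉ C(A)` for all `a ∈ A`) depend only on the integers `⌊m_j(β)⌋`: if `β'` is
likewise non-resonant with the same floors, then `x + β` is an apex point for `β` iff
`x + β'` is an apex point for `β'`, for every `x ∈ ℤ^r`. -/
theorem stmt12 (r n : ℕ) (A : Finset (Fin r → ℤ)) (m : Fin n → Fin r → ℤ)
    (hspan : Submodule.span ℤ (A : Set (Fin r → ℤ)) = ⊤)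
    (haff : ∃ h : (Fin r → ℝ) →ₗ[ℝ] ℝ, ∀ a ∈ A, h (fun i => (a i : ℝ)) = 1)
    (hgcd : ∀ j, Finset.univ.gcd (fun i => m j i) = 1)
    (hcone : {x : Fin r → ℝ | ∀ j, 0 ≤ ∑ i, (m j i : ℝ) * x i} =
      {x : Fin r → ℝ | ∃ c : (Fin r → ℤ) → ℝ, (∀ a, 0 ≤ c a) ∧
        x = ∑ a ∈ A, c a • (fun i => (a i : ℝ))})
    (β β' : Fin r → ℝ)
    (hres : ∀ j, ∀ z : ℤ, ∑ i, (m j i : ℝ) * β i ≠ z)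
    (hres' : ∀ j, ∀ z : ℤ, ∑ i, (m j i : ℝ) * β' i ≠ z)
    (hfloor : ∀ j, ⌊∑ i, (m j i : ℝ) * β i⌋ = ⌊∑ i, (m j i : ℝ) * β' i⌋)
    (x : Fin r → ℤ) :
    ((∀ j, 0 ≤ ∑ i, (m j i : ℝ) * ((x i : ℝ) + β i)) ∧
        ∀ a ∈ A, ¬ ∀ j, 0 ≤ ∑ i, (m j i : ℝ) * ((x i : ℝ) + β i - (a i : ℝ))) ↔
      ((∀ j, 0 ≤ ∑ i, (m j i : ℝ) * ((x i : ℝ) + β' i)) ∧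
        ∀ a ∈ A, ¬ ∀ j, 0 ≤ ∑ i, (m j i : ℝ) * ((x i : ℝ) + β' i - (a i : ℝ))) := by
  have key : ∀ j : Fin n, ∀ k : ℤ,
      (0 ≤ (k : ℝ) + ∑ i, (m j i : ℝ) * β i ↔ 0 ≤ (k : ℝ) + ∑ i, (m j i : ℝ) * β' i) :=
    fun j k => stmt12_key _ _ (hfloor j) k
  have rw1 : ∀ (b : Fin r → ℝ) (j : Fin n),
      ∑ i, (m j i : ℝ) * ((x i : ℝ) + b i)
        = ((∑ i, m j i * x i : ℤ) : ℝ) + ∑ i, (m j i : ℝ) * b i := by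
    intro b j
    push_cast
    rw [← Finset.sum_add_distrib]
    apply Finset.sum_congr rfl
    intro i _
    ring
  have rw2 : ∀ (b : Fin r → ℝ) (j : Fin n) (a : Fin r → ℤ),
      ∑ i, (m j i : ℝ) * ((x i : ℝ) + b i - (a i : ℝ))
        = ((∑ i, m j i * (x i - a i) : ℤ) : ℝ) + ∑ i, (m j i : ℝ) * b i := by
    intro b j a
    push_cast
    rw [← Finset.sum_add_distrib]
    apply Finset.sum_congr rfl
    intro i _
    ring
  constructor
  · rintro ⟨h1, h2⟩
    refine ⟨fun j => ?_, fun a ha hc => h2 a ha fun j => ?_⟩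
    · rw [rw1 β']; have h1j := h1 j; rw [rw1 β] at h1j; exact (key j _).mp h1j
    · have := hc j; rw [rw2 β'] at this; rw [rw2 β]; exact (key j _).mpr this
  · rintro ⟨h1, h2⟩
    refine ⟨fun j => ?_, fun a ha hc => h2 a ha fun j => ?_⟩
    · rw [rw1 β]; have h1j := h1 j; rw [rw1 β'] at h1j; exact (key j _).mpr h1j
    · have := hc j; rw [rw2 β] at this; rw [rw2 β']; exact (key j _).mp this
end

section
/- Let N ≥ 2, A = {(k,1) : -1 ≤ k ≤ N-2} ⊂ Z^2, and let C(A) be the cone spanned by A. For 0 ≤ i ≤ N-2 let V_i = {(i-1,1),(i,1)}. Fix β ∈ R^2 with β_1 + β_2 ∉ Z and -β_1 + (N-2)β_2 ∉ Z. Then a point (x,y) ∈ (β + Z^2) ∩ C(V_i) satisfies (x,y) - a ∉ C(A) for all a ∈ A if and only if x + y < i + 1 and x > (N-2)y - N + i + 1. -/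
/-- for `A = {(k,1) : -1 ≤ k ≤ N-2}` with cone
`C(A) = {(x,y) : x + y ≥ 0, -x + (N-2)y ≥ 0}`, `V_i = {(i-1,1), (i,1)}` with cone
`C(V_i) = {(x,y) : (i-1)y ≤ x ≤ iy, y ≥ 0}`, and non-resonant `β`, a point
`(x,y) ∈ (β + ℤ²) ∩ C(V_i)` satisfies `(x,y) - a ∉ C(A)` for all `a ∈ A`
if and only if `x + y < i + 1` and `x > (N-2)y - N + i + 1`. -/
theorem stmt13 (N : ℕ) (hN : 2 ≤ N) (i : ℕ) (hi : i ≤ N - 2)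
    (β1 β2 : ℝ)
    (h1 : ∀ z : ℤ, β1 + β2 ≠ z) (h2 : ∀ z : ℤ, -β1 + ((N : ℝ) - 2) * β2 ≠ z)
    (x y : ℝ) (hx : ∃ a : ℤ, x = β1 + a) (hy : ∃ b : ℤ, y = β2 + b)
    (hmem : ((i : ℝ) - 1) * y ≤ x ∧ x ≤ (i : ℝ) * y ∧ 0 ≤ y) :
    (∀ k : ℤ, -1 ≤ k → k ≤ (N : ℤ) - 2 →
        ¬(0 ≤ (x - (k : ℝ)) + (y - 1) ∧
          0 ≤ -(x - (k : ℝ)) + ((N : ℝ) - 2) * (y - 1))) ↔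
      (x + y < (i : ℝ) + 1 ∧ ((N : ℝ) - 2) * y - (N : ℝ) + (i : ℝ) + 1 < x) := by
  obtain ⟨hxl, hxr, hy0⟩ := hmem
  have hiN : (i : ℝ) + 2 ≤ (N : ℝ) := by
    have : i + 2 ≤ N := by omega
    exact_mod_cast this
  have hi0 : (0 : ℝ) ≤ i := by positivity
  constructor
  · intro h
    have hk2 := h (i : ℤ) (by omega) (by omega)
    have hk1 := h ((i : ℤ) - 1) (by omega) (by omega)
    rw [not_and_or, not_le, not_le] at hk1 hk2
    push_cast at hk1 hk2
    constructor
    · rcases hk2 with h' | h'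
      · linarith
      · -- x > (N-2)(y-1) + i, with x ≤ i*y  ⇒ (N-2-i)(y-1) < 0
        rcases eq_or_lt_of_le hiN with he | hlt
        · nlinarith
        · have hy1 : y < 1 := by nlinarith
          nlinarith
    · rcases hk1 with h' | h'
      · -- x + y < i, with x ≥ (i-1)y ⇒ i(y-1) < 0
        rcases eq_or_lt_of_le hi0 with he | hlt
        · nlinarith
        · have hy1 : y < 1 := by nlinarith
          nlinarith
      · linarith
  · rintro ⟨hA, hB⟩ k hk1 hk2 ⟨hc1, hc2⟩
    rcases le_or_gt (i : ℤ) k with hk | hk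
    · have : (i : ℝ) ≤ (k : ℝ) := by exact_mod_cast hk
      linarith
    · have : (k : ℝ) ≤ (i : ℝ) - 1 := by
        have : k ≤ (i : ℤ) - 1 := by omega
        exact_mod_cast this
      linarith
end

section
/- Let N ≥ 2, A = {(k,1) : -1 ≤ k ≤ N-2} ⊂ Z^2, and β ∈ R^2 with β_1 + β_2 ∉ Z and -β_1 + (N-2)β_2 ∉ Z, and suppose 0 ≤ β_1, β_2 < 1. Then the number of apex points equals N - 1 (the maximal possible value, equal to the length of the convex hull interval) if and only if (−β_1 + (N−2)β_2 < 0 and β_1 + β_2 < 1) or (−β_1 + (N−2)β_2 ≥ N−3 and β_1 + β_2 ≥ 1). -/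
private lemma keyIff (r : ℝ) (m : ℤ) : 0 ≤ r + (m:ℝ) ↔ 0 ≤ ⌊r⌋ + m := by
  rw [show ((0:ℤ) ≤ ⌊r⌋ + m) ↔ (-m ≤ ⌊r⌋) by omega, Int.le_floor]
  push_cast
  constructor <;> intro h <;> linarith

private lemma auxSet (N : ℕ) (hN : 2 ≤ N) (β1 β2 : ℝ) (b₀ j : ℤ)
    (hlb : -1 ≤ ⌊β1 + β2⌋ + ⌊-β1 + ((N : ℝ) - 2) * β2⌋)
    (hub : ⌊β1 + β2⌋ + ⌊-β1 + ((N : ℝ) - 2) * β2⌋ ≤ (N : ℤ) - 2)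
    (hjdef : j = ((N : ℤ) - 1) * b₀ + ⌊β1 + β2⌋ + ⌊-β1 + ((N : ℝ) - 2) * β2⌋)
    (hj0 : 0 ≤ j) (hjN : j ≤ (N : ℤ) - 2)
    (hb0 : 0 ≤ b₀) (hb1 : b₀ ≤ 1) :
    {p : ℝ × ℝ | (∃ a : ℤ, p.1 = β1 + a) ∧ (∃ b : ℤ, p.2 = β2 + b) ∧
        (0 ≤ p.1 + p.2 ∧ 0 ≤ -p.1 + ((N : ℝ) - 2) * p.2) ∧
        ∀ k : ℤ, -1 ≤ k → k ≤ (N : ℤ) - 2 →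
          ¬(0 ≤ (p.1 - (k : ℝ)) + (p.2 - 1) ∧
            0 ≤ -(p.1 - (k : ℝ)) + ((N : ℝ) - 2) * (p.2 - 1))}
      = (fun U : ℤ => ((β1 + ((U - ⌊β1 + β2⌋ - b₀ : ℤ) : ℝ), β2 + (b₀ : ℝ)) : ℝ × ℝ))
          '' (Set.Icc 0 j) := by
  have hN' : (2:ℤ) ≤ (N:ℤ) := by exact_mod_cast hN
  set σ : ℤ := ⌊β1 + β2⌋ with hσdef
  set τ : ℤ := ⌊-β1 + ((N : ℝ) - 2) * β2⌋ with hτdef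
  ext ⟨p1, p2⟩
  simp only [Set.mem_setOf_eq, Set.mem_image, Set.mem_Icc]
  constructor
  · rintro ⟨⟨a, ha⟩, ⟨b, hb⟩, ⟨hc1, hc2⟩, hapex⟩
    subst ha; subst hb
    have e1 : β1 + (a:ℝ) + (β2 + (b:ℝ)) = (β1 + β2) + ((a + b : ℤ) : ℝ) := by
      push_cast; ring
    have hU : 0 ≤ σ + (a + b) := by
      rw [e1, keyIff] at hc1; omega
    have e2 : -(β1 + (a:ℝ)) + ((N : ℝ) - 2) * (β2 + (b:ℝ))
        = (-β1 + ((N : ℝ) - 2) * β2) + ((-a + ((N:ℤ) - 2) * b : ℤ) : ℝ) := by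
      push_cast; ring
    have hV : 0 ≤ τ + (-a + ((N:ℤ) - 2) * b) := by
      rw [e2, keyIff] at hc2; omega
    -- sum bound via apex
    have hsum : σ + (a + b) + (τ + (-a + ((N:ℤ) - 2) * b)) ≤ (N:ℤ) - 2 := by
      by_contra hcon
      push_neg at hcon
      set V : ℤ := τ + (-a + ((N:ℤ) - 2) * b) with hVdef
      set k : ℤ := max (-1) ((N:ℤ) - 2 - V) with hkdef
      have hk1 : -1 ≤ k := le_max_left _ _
      have hk2 : (N:ℤ) - 2 - V ≤ k := le_max_right _ _
      have hk3 : k ≤ (N:ℤ) - 2 := max_le (by omega) (by omega)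
      have hk4 : k ≤ σ + (a + b) - 1 := max_le (by omega) (by omega)
      apply hapex k hk1 hk3
      constructor
      · have e3 : β1 + (a:ℝ) - (k:ℝ) + (β2 + (b:ℝ) - 1)
            = (β1 + β2) + ((a + b - k - 1 : ℤ) : ℝ) := by push_cast; ring
        rw [e3, keyIff]; omega
      · have e4 : -(β1 + (a:ℝ) - (k:ℝ)) + ((N : ℝ) - 2) * (β2 + (b:ℝ) - 1)
            = (-β1 + ((N : ℝ) - 2) * β2)
              + ((-a + ((N:ℤ) - 2) * b + k - ((N:ℤ) - 2) : ℤ) : ℝ) := by push_cast; ring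
        rw [e4, keyIff]
        have : τ + (-a + ((N:ℤ) - 2) * b + k - ((N:ℤ) - 2)) = V + k - ((N:ℤ) - 2) := by
          rw [hVdef]; ring
        omega
    have hb_ge : 0 ≤ b := by
      by_contra hcb
      push_neg at hcb
      have h2 : ((N:ℤ) - 1) * b ≤ ((N:ℤ) - 1) * (-1) :=
        mul_le_mul_of_nonneg_left (by omega) (by omega)
      have hexp : σ + (a + b) + (τ + (-a + ((N:ℤ) - 2) * b))
          = ((N:ℤ) - 1) * b + σ + τ := by ring
      nlinarith [hU, hV, hexp, hub]
    have hb_le : b ≤ 1 := by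
      by_contra hcb
      push_neg at hcb
      have h2 : ((N:ℤ) - 1) * 2 ≤ ((N:ℤ) - 1) * b :=
        mul_le_mul_of_nonneg_left (by omega) (by omega)
      have hexp : σ + (a + b) + (τ + (-a + ((N:ℤ) - 2) * b))
          = ((N:ℤ) - 1) * b + σ + τ := by ring
      nlinarith [hsum, hlb, h2, hexp]
    have hbb : b = b₀ := by
      interval_cases b <;> interval_cases b₀ <;>
        simp only [mul_zero, mul_one] at hU hV hsum hjdef ⊢ <;> omega
    subst hbb
    refine ⟨σ + (a + b), ⟨hU, ?_⟩, ?_⟩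
    · -- U ≤ j
      have hexp : σ + (a + b) + (τ + (-a + ((N:ℤ) - 2) * b))
          = ((N:ℤ) - 1) * b + σ + τ := by ring
      linarith [hV, hjdef, hexp]
    · have : σ + (a + b) - σ - b = a := by ring
      rw [this]
  · rintro ⟨U, ⟨hU0, hUj⟩, heq⟩
    rw [Prod.mk.injEq] at heq
    obtain ⟨he1, he2⟩ := heq
    refine ⟨⟨U - σ - b₀, he1.symm⟩, ⟨b₀, he2.symm⟩, ⟨?_, ?_⟩, ?_⟩
    · rw [← he1, ← he2]
      have e1 : β1 + ((U - σ - b₀ : ℤ):ℝ) + (β2 + (b₀:ℝ))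
          = (β1 + β2) + ((U - σ : ℤ) : ℝ) := by push_cast; ring
      rw [e1, keyIff]; omega
    · rw [← he1, ← he2]
      have e2 : -(β1 + ((U - σ - b₀ : ℤ):ℝ)) + ((N : ℝ) - 2) * (β2 + (b₀:ℝ))
          = (-β1 + ((N : ℝ) - 2) * β2) + ((σ - U + ((N:ℤ) - 1) * b₀ : ℤ) : ℝ) := by
        push_cast; ring
      rw [e2, keyIff]
      have : 0 ≤ τ + (σ - U + ((N:ℤ) - 1) * b₀) ↔ 0 ≤ j - U := by
        constructor <;> intro <;> linarith [hjdef]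
      rw [this]; omega
    · intro k hk1 hk2 ⟨hA, hB⟩
      rw [← he1, ← he2] at hA hB
      have e3 : β1 + ((U - σ - b₀ : ℤ):ℝ) - (k:ℝ) + (β2 + (b₀:ℝ) - 1)
          = (β1 + β2) + ((U - σ - k - 1 : ℤ) : ℝ) := by push_cast; ring
      rw [e3, keyIff] at hA
      have e4 : -(β1 + ((U - σ - b₀ : ℤ):ℝ) - (k:ℝ)) + ((N : ℝ) - 2) * (β2 + (b₀:ℝ) - 1)
          = (-β1 + ((N : ℝ) - 2) * β2)
            + ((σ - U + ((N:ℤ) - 1) * b₀ + k - ((N:ℤ) - 2) : ℤ) : ℝ) := by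
        push_cast; ring
      rw [e4, keyIff] at hB
      -- hA : 0 ≤ σ + (U - σ - k - 1), hB : 0 ≤ τ + (σ - U + (N-1)b₀ + k - (N-2))
      have hB' : 0 ≤ j - U + k - ((N:ℤ) - 2) := by linarith [hjdef]
      omega

/-- for `A = {(k,1) : -1 ≤ k ≤ N-2}` with cone
`C(A) = {(x,y) : x + y ≥ 0, -x + (N-2)y ≥ 0}` and non-resonant `β` with
`0 ≤ β₁, β₂ < 1`, the number of apex points equals `N - 1` if and only if
`(-β₁ + (N-2)β₂ < 0 ∧ β₁ + β₂ < 1)` or `(-β₁ + (N-2)β₂ ≥ N-3 ∧ β₁ + β₂ ≥ 1)`. -/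
theorem stmt14 (N : ℕ) (hN : 2 ≤ N) (β1 β2 : ℝ)
    (hb1 : 0 ≤ β1) (hb1' : β1 < 1) (hb2 : 0 ≤ β2) (hb2' : β2 < 1)
    (h1 : ∀ z : ℤ, β1 + β2 ≠ z) (h2 : ∀ z : ℤ, -β1 + ((N : ℝ) - 2) * β2 ≠ z) :
    {p : ℝ × ℝ | (∃ a : ℤ, p.1 = β1 + a) ∧ (∃ b : ℤ, p.2 = β2 + b) ∧
        (0 ≤ p.1 + p.2 ∧ 0 ≤ -p.1 + ((N : ℝ) - 2) * p.2) ∧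
        ∀ k : ℤ, -1 ≤ k → k ≤ (N : ℤ) - 2 →
          ¬(0 ≤ (p.1 - (k : ℝ)) + (p.2 - 1) ∧
            0 ≤ -(p.1 - (k : ℝ)) + ((N : ℝ) - 2) * (p.2 - 1))}.ncard = N - 1 ↔
      ((-β1 + ((N : ℝ) - 2) * β2 < 0 ∧ β1 + β2 < 1) ∨
        ((N : ℝ) - 3 ≤ -β1 + ((N : ℝ) - 2) * β2 ∧ 1 ≤ β1 + β2)) := by
  have hN' : (2:ℝ) ≤ (N:ℝ) := by exact_mod_cast hN
  have hNz : (2:ℤ) ≤ (N:ℤ) := by exact_mod_cast hN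
  set σ : ℤ := ⌊β1 + β2⌋ with hσdef
  set τ : ℤ := ⌊-β1 + ((N : ℝ) - 2) * β2⌋ with hτdef
  have hmul0 : 0 ≤ ((N:ℝ) - 2) * β2 := mul_nonneg (by linarith) hb2
  have hmul1 : ((N:ℝ) - 2) * β2 ≤ (N:ℝ) - 2 := by nlinarith
  have hσ0 : 0 ≤ σ := Int.le_floor.mpr (by push_cast; linarith)
  have hσ1 : σ ≤ 1 := by
    have : σ < 2 := Int.floor_lt.mpr (by push_cast; linarith)
    omega
  have hτ0 : -1 ≤ τ := Int.le_floor.mpr (by push_cast; linarith)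
  have hτ1 : τ ≤ (N:ℤ) - 3 := by
    have hne : -β1 + ((N : ℝ) - 2) * β2 ≠ (((N:ℤ) - 2 : ℤ) : ℝ) := h2 _
    have hlt : -β1 + ((N : ℝ) - 2) * β2 < (((N:ℤ) - 2 : ℤ) : ℝ) := by
      rcases lt_or_eq_of_le (show -β1 + ((N : ℝ) - 2) * β2 ≤ (((N:ℤ) - 2 : ℤ) : ℝ) by
        push_cast; linarith) with h | h
      · exact h
      · exact absurd h hne
    have := Int.floor_lt.mpr hlt
    omega
  -- translate the RHS conditions
  have hC1 : (-β1 + ((N : ℝ) - 2) * β2 < 0 ∧ β1 + β2 < 1) ↔ (τ = -1 ∧ σ = 0) := by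
    constructor
    · rintro ⟨ha, hb⟩
      have h1' : τ < 0 := Int.floor_lt.mpr (by push_cast; linarith)
      have h2' : σ < 1 := Int.floor_lt.mpr (by push_cast; linarith)
      omega
    · rintro ⟨ha, hb⟩
      have h1' := Int.lt_floor_add_one (-β1 + ((N : ℝ) - 2) * β2)
      have h2' := Int.lt_floor_add_one (β1 + β2)
      rw [← hτdef, ha] at h1'
      rw [← hσdef, hb] at h2'
      push_cast at h1' h2'
      constructor <;> linarith
  have hC2 : ((N : ℝ) - 3 ≤ -β1 + ((N : ℝ) - 2) * β2 ∧ 1 ≤ β1 + β2) ↔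
      (τ = (N:ℤ) - 3 ∧ σ = 1) := by
    constructor
    · rintro ⟨ha, hb⟩
      have h1' : (N:ℤ) - 3 ≤ τ := Int.le_floor.mpr (by push_cast; linarith)
      have h2' : (1:ℤ) ≤ σ := Int.le_floor.mpr (by push_cast; linarith)
      omega
    · rintro ⟨ha, hb⟩
      have h1' := Int.floor_le (-β1 + ((N : ℝ) - 2) * β2)
      have h2' := Int.floor_le (β1 + β2)
      rw [← hτdef, ha] at h1'
      rw [← hσdef, hb] at h2'
      push_cast at h1' h2'
      constructor <;> linarith
  have hinj : ∀ b₀ : ℤ, Function.Injective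
      (fun U : ℤ => ((β1 + ((U - σ - b₀ : ℤ) : ℝ), β2 + (b₀ : ℝ)) : ℝ × ℝ)) := by
    intro b₀ x y hxy
    rw [Prod.mk.injEq] at hxy
    have := hxy.1
    have h' : ((x - σ - b₀ : ℤ) : ℝ) = ((y - σ - b₀ : ℤ) : ℝ) := by linarith
    have : (x - σ - b₀ : ℤ) = (y - σ - b₀ : ℤ) := by exact_mod_cast h'
    omega
  have hcard : ∀ j : ℤ, 0 ≤ j → ∀ b₀ : ℤ,
      ((fun U : ℤ => ((β1 + ((U - σ - b₀ : ℤ) : ℝ), β2 + (b₀ : ℝ)) : ℝ × ℝ))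
        '' (Set.Icc 0 j)).ncard = (j + 1).toNat := by
    intro j hj b₀
    rw [Set.ncard_image_of_injective _ (hinj b₀), ← Finset.coe_Icc,
      Set.ncard_coe_finset, Int.card_Icc]
    omega
  have tri : (σ = 0 ∧ τ = -1) ∨ (0 ≤ σ + τ ∧ σ + τ ≤ (N:ℤ) - 3) ∨
      (σ = 1 ∧ τ = (N:ℤ) - 3) := by omega
  rcases tri with ⟨hs, ht⟩ | ⟨hst0, hst1⟩ | ⟨hs, ht⟩
  · rw [auxSet N hN β1 β2 1 ((N:ℤ)-2) (by omega) (by omega)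
      (by rw [← hσdef, ← hτdef, hs, ht]; ring) (by omega) (by omega) (by omega) (by omega)]
    rw [← hσdef, ← hτdef] at *
    rw [hcard ((N:ℤ)-2) (by omega) 1, hC1, hC2]
    omega
  · rw [auxSet N hN β1 β2 0 (σ + τ) (by omega) (by omega)
      (by rw [← hσdef, ← hτdef]; ring) (by omega) (by omega) (by omega) (by omega)]
    rw [← hσdef, ← hτdef] at *
    rw [hcard (σ + τ) (by omega) 0, hC1, hC2]
    omega
  · rw [auxSet N hN β1 β2 0 ((N:ℤ)-2) (by omega) (by omega)
      (by rw [← hσdef, ← hτdef, hs, ht]; ring) (by omega) (by omega) (by omega) (by omega)]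
    rw [← hσdef, ← hτdef] at *
    rw [hcard ((N:ℤ)-2) (by omega) 0, hC1, hC2]
    omega
end

section
/- Let i ≥ 1, A_i = {(-1,-1)} ∪ {(k,0) : 0 ≤ k ≤ i} ∪ {(0,1)} ⊂ Z^2 (the lattice points of the triangle with vertices (-1,-1), (i,0), (0,1)). Its cone in Z^3 (appending third coordinate 1) is C = {x ∈ R^3 : -x_1 - i x_2 + i x_3 ≥ 0, 2x_1 - x_2 + x_3 ≥ 0, -x_1 + (i+1)x_2 + i x_3 ≥ 0}. Let β = (r, 1/2, 1/2) with 0 < r < 1, r ≠ 1/2. Then the points (k,0,1) + β for 0 ≤ k ≤ i-1 (if 0 < r < 1/2) resp. -1 ≤ k ≤ i-1 (if 1/2 < r < 1), together with (l,-1,1) + β for -1 ≤ l ≤ i-1 (if 0 < r < 1/2) resp. -1 ≤ l ≤ i-2 (if 1/2 < r < 1), are exactly 2i+1 apex points: each lies in C, and subtracting any element (a,1) of A_i × {1} leaves C. -/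
noncomputable section

/-- The nonnegative real cone of the configuration `A_i^{(2)}` in `ℝ³`. -/
def coneA (i : ℕ) : Set (ℝ × ℝ × ℝ) :=
  {p | 0 ≤ -p.1 - (i : ℝ) * p.2.1 + (i : ℝ) * p.2.2 ∧
       0 ≤ 2 * p.1 - p.2.1 + p.2.2 ∧
       0 ≤ -p.1 + ((i : ℝ) + 1) * p.2.1 + (i : ℝ) * p.2.2}

/-- The planar point configuration `A_i = {(-1,-1)} ∪ {(k,0) : 0 ≤ k ≤ i} ∪ {(0,1)}`. -/
def ptsA (i : ℕ) : Set (ℤ × ℤ) :=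
  {((-1 : ℤ), (-1 : ℤ))} ∪ {a : ℤ × ℤ | a.2 = 0 ∧ 0 ≤ a.1 ∧ a.1 ≤ (i : ℤ)} ∪
    {((0 : ℤ), (1 : ℤ))}

/-- `p` is an apex point of `A_i^{(2)}` for the parameter `β = (r, 1/2, 1/2)`:
`p ∈ (β + ℤ³) ∩ C`, and subtracting any `(a,1)` with `a ∈ A_i` leaves the cone. -/
def IsApexPoint (i : ℕ) (r : ℝ) (p : ℝ × ℝ × ℝ) : Prop :=
  p ∈ coneA i ∧
  (∃ z : ℤ, p.1 = r + z) ∧ (∃ z : ℤ, p.2.1 = 1 / 2 + z) ∧ (∃ z : ℤ, p.2.2 = 1 / 2 + z) ∧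
  ∀ a ∈ ptsA i, (p.1 - (a.1 : ℝ), p.2.1 - (a.2 : ℝ), p.2.2 - 1) ∉ coneA i


lemma apexA (i : ℕ) (hi : 1 ≤ i) (r : ℝ) (h0 : 0 < r) (h1 : r < 1) (k : ℤ)
    (hk : (k : ℝ) ≤ (i : ℝ) - 1) (hlow : -(1/2 : ℝ) < (k : ℝ) + r) :
    IsApexPoint i r ((k : ℝ) + r, (0 : ℝ) + 1 / 2, (1 : ℝ) + 1 / 2) := by
  have hi' : (1 : ℝ) ≤ (i : ℝ) := by exact_mod_cast hi
  refine ⟨⟨by norm_num; nlinarith, by norm_num; linarith, by norm_num; nlinarith⟩,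
    ⟨k, by ring⟩, ⟨0, by norm_num⟩, ⟨1, by norm_num⟩, ?_⟩
  rintro a ((rfl | ⟨h2, hm0, hmi⟩) | rfl) ⟨c1, c2, c3⟩
  · simp only at c1 c2 c3
    push_cast at c1 c2 c3
    nlinarith
  · obtain ⟨m, n⟩ := a
    simp only at h2 hm0 hmi
    subst h2
    simp only at c1 c2 c3
    push_cast at c1 c2 c3
    have hkm : ((k - m : ℤ) : ℝ) = -r := by push_cast; nlinarith
    have hl1 : ((k - m : ℤ) : ℝ) < 0 := by rw [hkm]; linarith
    have hl2 : (-1 : ℝ) < ((k - m : ℤ) : ℝ) := by rw [hkm]; linarith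
    have hl1' : (k - m : ℤ) < 0 := by exact_mod_cast hl1
    have hl2' : (-1 : ℤ) < k - m := by exact_mod_cast hl2
    omega
  · simp only at c1 c2 c3
    push_cast at c1 c2 c3
    nlinarith

lemma apexB (i : ℕ) (hi : 1 ≤ i) (r : ℝ) (h0 : 0 < r) (h1 : r < 1) (hr : r ≠ 1 / 2)
    (l : ℤ) (hl : (-1 : ℝ) ≤ (l : ℝ)) (hupp : (l : ℝ) + r < (i : ℝ) - 1/2) :
    IsApexPoint i r ((l : ℝ) + r, (-1 : ℝ) + 1 / 2, (1 : ℝ) + 1 / 2) := by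
  have hi' : (1 : ℝ) ≤ (i : ℝ) := by exact_mod_cast hi
  refine ⟨⟨by norm_num; nlinarith, by norm_num; linarith, by norm_num; nlinarith⟩,
    ⟨l, by ring⟩, ⟨-1, by push_cast; ring⟩, ⟨1, by norm_num⟩, ?_⟩
  rintro a ((rfl | ⟨h2, hm0, hmi⟩) | rfl) ⟨c1, c2, c3⟩
  · simp only at c1 c2 c3
    push_cast at c1 c2 c3
    nlinarith
  · obtain ⟨m, n⟩ := a
    simp only at h2 hm0 hmi
    subst h2
    simp only at c1 c2 c3
    push_cast at c1 c2 c3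
    have hlm : ((l - m : ℤ) : ℝ) = -(1/2) - r := by push_cast; nlinarith
    have hg1 : ((l - m : ℤ) : ℝ) < 0 := by rw [hlm]; linarith
    have hg2 : (-2 : ℝ) < ((l - m : ℤ) : ℝ) := by rw [hlm]; linarith
    have hg1' : (l - m : ℤ) < 0 := by exact_mod_cast hg1
    have hg2' : (-2 : ℤ) < l - m := by exact_mod_cast hg2
    have : l - m = -1 := by omega
    rw [this] at hlm
    push_cast at hlm
    exact hr (by linarith)
  · simp only at c1 c2 c3
    push_cast at c1 c2 c3
    nlinarith

lemma inj_fst (r y z : ℝ) : Function.Injective (fun k : ℤ => ((k : ℝ) + r, y, z)) := by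
  intro k1 k2 h
  have : (k1 : ℝ) + r = (k2 : ℝ) + r := congrArg Prod.fst h
  have h2 : (k1 : ℝ) = (k2 : ℝ) := by linarith
  exact_mod_cast h2

lemma ncard_img (r y z : ℝ) (a b : ℤ) :
    ((fun k : ℤ => ((k : ℝ) + r, y, z)) '' {k : ℤ | a ≤ k ∧ k ≤ b}).ncard
      = (b + 1 - a).toNat := by
  have hset : {k : ℤ | a ≤ k ∧ k ≤ b} = ↑(Finset.Icc a b) := by
    ext k; simp [Finset.mem_Icc]
  rw [Set.ncard_image_of_injective _ (inj_fst r y z), hset, Set.ncard_coe_finset,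
    Int.card_Icc]

lemma fin_img (r y z : ℝ) (a b : ℤ) :
    ((fun k : ℤ => ((k : ℝ) + r, y, z)) '' {k : ℤ | a ≤ k ∧ k ≤ b}).Finite := by
  have hset : {k : ℤ | a ≤ k ∧ k ≤ b} = ↑(Finset.Icc a b) := by
    ext k; simp [Finset.mem_Icc]
  rw [hset]
  exact ((Finset.Icc a b).finite_toSet).image _

lemma disj_img (r : ℝ) (a b c d : ℤ) :
    Disjoint ((fun k : ℤ => ((k : ℝ) + r, (0 : ℝ) + 1 / 2, (1 : ℝ) + 1 / 2)) ''
        {k : ℤ | a ≤ k ∧ k ≤ b})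
      ((fun l : ℤ => ((l : ℝ) + r, (-1 : ℝ) + 1 / 2, (1 : ℝ) + 1 / 2)) ''
        {l : ℤ | c ≤ l ∧ l ≤ d}) := by
  rw [Set.disjoint_left]
  rintro p ⟨k, _, rfl⟩ ⟨l, _, heq⟩
  have := congrArg (fun q : ℝ × ℝ × ℝ => q.2.1) heq
  norm_num at this

/-- for `β = (r, 1/2, 1/2)` with `0 < r < 1`, `r ≠ 1/2`, the points
`(k,0,1) + β` for `0 ≤ k ≤ i-1` (resp. `-1 ≤ k ≤ i-1`), together with `(l,-1,1) + β`
for `-1 ≤ l ≤ i-1` (resp. `-1 ≤ l ≤ i-2`) when `0 < r < 1/2` (resp. `1/2 < r < 1`),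
are exactly `2i + 1` apex points of `A_i^{(2)}`. -/
theorem stmt15 (i : ℕ) (hi : 1 ≤ i) (r : ℝ) (h0 : 0 < r) (h1 : r < 1) (hr : r ≠ 1 / 2) :
    (r < 1 / 2 →
      (∀ p ∈ ((fun k : ℤ => ((k : ℝ) + r, (0 : ℝ) + 1 / 2, (1 : ℝ) + 1 / 2)) ''
            {k : ℤ | 0 ≤ k ∧ k ≤ (i : ℤ) - 1} ∪
          (fun l : ℤ => ((l : ℝ) + r, (-1 : ℝ) + 1 / 2, (1 : ℝ) + 1 / 2)) ''
            {l : ℤ | -1 ≤ l ∧ l ≤ (i : ℤ) - 1}), IsApexPoint i r p) ∧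
      ((fun k : ℤ => ((k : ℝ) + r, (0 : ℝ) + 1 / 2, (1 : ℝ) + 1 / 2)) ''
            {k : ℤ | 0 ≤ k ∧ k ≤ (i : ℤ) - 1} ∪
          (fun l : ℤ => ((l : ℝ) + r, (-1 : ℝ) + 1 / 2, (1 : ℝ) + 1 / 2)) ''
            {l : ℤ | -1 ≤ l ∧ l ≤ (i : ℤ) - 1}).ncard = 2 * i + 1) ∧
    (1 / 2 < r →
      (∀ p ∈ ((fun k : ℤ => ((k : ℝ) + r, (0 : ℝ) + 1 / 2, (1 : ℝ) + 1 / 2)) ''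
            {k : ℤ | -1 ≤ k ∧ k ≤ (i : ℤ) - 1} ∪
          (fun l : ℤ => ((l : ℝ) + r, (-1 : ℝ) + 1 / 2, (1 : ℝ) + 1 / 2)) ''
            {l : ℤ | -1 ≤ l ∧ l ≤ (i : ℤ) - 2}), IsApexPoint i r p) ∧
      ((fun k : ℤ => ((k : ℝ) + r, (0 : ℝ) + 1 / 2, (1 : ℝ) + 1 / 2)) ''
            {k : ℤ | -1 ≤ k ∧ k ≤ (i : ℤ) - 1} ∪
          (fun l : ℤ => ((l : ℝ) + r, (-1 : ℝ) + 1 / 2, (1 : ℝ) + 1 / 2)) ''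
            {l : ℤ | -1 ≤ l ∧ l ≤ (i : ℤ) - 2}).ncard = 2 * i + 1) := by
  constructor
  · intro hhalf
    constructor
    · rintro p (⟨k, ⟨hk0, hk1⟩, rfl⟩ | ⟨l, ⟨hl0, hl1⟩, rfl⟩)
      · exact apexA i hi r h0 h1 k (by exact_mod_cast hk1)
          (by have : (0:ℝ) ≤ (k:ℝ) := by exact_mod_cast hk0
              linarith)
      · exact apexB i hi r h0 h1 hr l (by exact_mod_cast hl0)
          (by have : (l:ℝ) ≤ (i:ℝ) - 1 := by exact_mod_cast hl1
              linarith)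
    · rw [Set.ncard_union_eq (disj_img r _ _ _ _) (fin_img _ _ _ _ _) (fin_img _ _ _ _ _),
        ncard_img, ncard_img]
      omega
  · intro hhalf
    constructor
    · rintro p (⟨k, ⟨hk0, hk1⟩, rfl⟩ | ⟨l, ⟨hl0, hl1⟩, rfl⟩)
      · exact apexA i hi r h0 h1 k (by exact_mod_cast hk1)
          (by have : (-1:ℝ) ≤ (k:ℝ) := by exact_mod_cast hk0
              linarith)
      · exact apexB i hi r h0 h1 hr l (by exact_mod_cast hl0)
          (by have : (l:ℝ) ≤ (i:ℝ) - 2 := by exact_mod_cast hl1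
              linarith)
    · rw [Set.ncard_union_eq (disj_img r _ _ _ _) (fin_img _ _ _ _ _) (fin_img _ _ _ _ _),
        ncard_img, ncard_img]
      omega
end
end

section
/- Let P be a lattice triangle with boundary lattice points (0,0),(1,0),...,(b-2,0) and (c,d) with d > 0, where b ≥ 6 and P has i ≥ 3 interior lattice points. Then d = 2i/(b-2) + 1 is an integer ≥ 2, and at least one of the two subtriangles P' with vertices (0,0), (b-3,0), (c,d) and P'' with vertices (1,0), (b-2,0), (c,d) has at least one interior lattice point, at least 5 boundary lattice points, and normalized area (b-3)d ≥ 7. -/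
/-!
Write `B = b - 2`. The lattice points with `0 < y < d` lying strictly right of the left edge of `P`
and at most `B` further right form a parallelogram with `B` points in each row, `(d - 1) B` in all.
The point reflection `(x, y) ↦ (B + c - x, d - y)` maps this set to itself and exchanges the points
left of the right edge of `P`, i.e. the interior points of `P`, with those right of it; none lies
on that edge, since the slanted edges of `P` carry no lattice points. Hence `2 i = (d - 1) B`
(Pick's formula for `P`). An interior point of `P` is interior to `P'` or to `P''`, because these
overlap in a triangle with base of positive length `b - 4`; each of them has at least four
lattice points on its base and the apex `(c, d)` on its boundary.
-/

noncomputable section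

open Set MeasureTheory

section Triangle

def halfPlane (α β r : ℝ) : Set (ℝ × ℝ) := {p | r ≤ α * p.1 + β * p.2}

lemma halfPlane_eq_preimage (α β r : ℝ) :
    halfPlane α β r =
      (α • ContinuousLinearMap.fst ℝ ℝ ℝ + β • ContinuousLinearMap.snd ℝ ℝ ℝ) ⁻¹' Ici r := by
  ext p; simp [halfPlane]

lemma convex_halfPlane (α β r : ℝ) : Convex ℝ (halfPlane α β r) := by
  rw [halfPlane_eq_preimage]
  exact (convex_Ici r).linear_preimage _

lemma interior_halfPlane {α β : ℝ} (h : α ≠ 0 ∨ β ≠ 0) (r : ℝ) :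
    interior (halfPlane α β r) = {p | r < α * p.1 + β * p.2} := by
  have hsurj : Function.Surjective
      (α • ContinuousLinearMap.fst ℝ ℝ ℝ + β • ContinuousLinearMap.snd ℝ ℝ ℝ) := by
    intro t
    rcases h with h | h
    · exact ⟨(t / α, 0), by simp [mul_div_cancel₀ t h]⟩
    · exact ⟨(0, t / β), by simp [mul_div_cancel₀ t h]⟩
  rw [halfPlane_eq_preimage, ContinuousLinearMap.interior_preimage _ hsurj, interior_Ici]
  ext p; simp

def tri (a e c d : ℝ) : Set (ℝ × ℝ) := convexHull ℝ {(a, 0), (e, 0), (c, d)}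

variable {a e c d : ℝ}

lemma tri_eq_inter (hae : a < e) (hd : 0 < d) :
    tri a e c d =
      halfPlane 0 1 0 ∩ halfPlane d (a - c) (d * a) ∩ halfPlane (-d) (c - e) (-(d * e)) := by
  apply Subset.antisymm
  · refine convexHull_min ?_ (((convex_halfPlane _ _ _).inter (convex_halfPlane _ _ _)).inter
      (convex_halfPlane _ _ _))
    simp only [insert_subset_iff, singleton_subset_iff, mem_inter_iff, halfPlane, mem_ofPred_eq]
    refine ⟨⟨⟨?_, ?_⟩, ?_⟩, ⟨⟨?_, ?_⟩, ?_⟩, ⟨⟨?_, ?_⟩, ?_⟩⟩ <;> nlinarith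
  · rintro p ⟨⟨h₁, h₂⟩, h₃⟩
    unfold tri
    simp only [halfPlane, mem_ofPred_eq] at h₁ h₂ h₃
    have hed : 0 < (e - a) * d := mul_pos (sub_pos.2 hae) hd
    have hea : e - a ≠ 0 := (sub_pos.2 hae).ne'
    have hd0 : d ≠ 0 := hd.ne'
    -- barycentric coordinates of `p`
    let w : Fin 3 → ℝ := ![(d * (e - p.1) - (e - c) * p.2) / ((e - a) * d),
      (d * (p.1 - a) - (c - a) * p.2) / ((e - a) * d), p.2 / d]
    let v : Fin 3 → ℝ × ℝ := ![(a, 0), (e, 0), (c, d)]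
    have hw : ∀ i ∈ Finset.univ, 0 ≤ w i := by
      intro i _
      fin_cases i
      · exact div_nonneg (by linarith) hed.le
      · exact div_nonneg (by linarith) hed.le
      · exact div_nonneg (by linarith) hd.le
    have hsum : ∑ i, w i = 1 := by
      simp only [Fin.sum_univ_three, Fin.isValue, Matrix.cons_val_zero, Matrix.cons_val_one,
        Matrix.cons_val, w]
      field_simp
      ring
    have hv : ∀ i ∈ Finset.univ, v i ∈ ({(a, 0), (e, 0), (c, d)} : Set (ℝ × ℝ)) := by
      intro i _; fin_cases i <;> simp [v]
    convert (convex_convexHull ℝ _).sum_mem hw hsum fun i hi => subset_convexHull ℝ _ (hv i hi)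
    simp only [Fin.sum_univ_three, Fin.isValue, Matrix.cons_val_zero, Prod.smul_mk, smul_eq_mul,
      mul_zero, Matrix.cons_val_one, Prod.mk_add_mk, add_zero, Matrix.cons_val, zero_add,
      Prod.ext_iff, w, v]
    constructor
    · field_simp
      ring
    · field_simp

lemma mem_tri (hae : a < e) (hd : 0 < d) {p : ℝ × ℝ} :
    p ∈ tri a e c d ↔ 0 ≤ p.2 ∧ (c - a) * p.2 ≤ d * (p.1 - a) ∧ (e - c) * p.2 ≤ d * (e - p.1) := by
  simp only [tri_eq_inter hae hd, mem_inter_iff, halfPlane, mem_ofPred_eq, and_assoc]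
  constructor <;> rintro ⟨h₁, h₂, h₃⟩ <;> refine ⟨?_, ?_, ?_⟩ <;> linarith

lemma mem_interior_tri (hae : a < e) (hd : 0 < d) {p : ℝ × ℝ} :
    p ∈ interior (tri a e c d) ↔
      0 < p.2 ∧ (c - a) * p.2 < d * (p.1 - a) ∧ (e - c) * p.2 < d * (e - p.1) := by
  rw [tri_eq_inter hae hd, interior_inter, interior_inter, interior_halfPlane (by simp),
    interior_halfPlane (.inl hd.ne'), interior_halfPlane (.inl (neg_ne_zero.2 hd.ne'))]
  simp only [mem_inter_iff, mem_ofPred_eq, and_assoc]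
  constructor <;> rintro ⟨h₁, h₂, h₃⟩ <;> refine ⟨?_, ?_, ?_⟩ <;> linarith

lemma volume_tri (hae : a < e) (hd : 0 < d) :
    volume (tri a e c d) = ENNReal.ofReal ((e - a) * d / 2) := by
  set L : ℝ → ℝ := fun y => a + (c - a) * y / d
  set R : ℝ → ℝ := fun y => e - (e - c) * y / d
  have hinterior : interior (tri a e c d) = Prod.swap ⁻¹' regionBetween L R (Ioo 0 d) := by
    ext p
    simp only [mem_interior_tri hae hd, regionBetween, mem_preimage, mem_ofPred_eq, Prod.fst_swap,
      Prod.snd_swap, mem_Ioo, L, R, ← lt_sub_iff_add_lt', lt_sub_comm (a := p.1),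
      div_lt_iff₀ hd]
    constructor
    · rintro ⟨h₁, h₂, h₃⟩
      exact ⟨⟨h₁, by nlinarith⟩, by linarith, by linarith⟩
    · rintro ⟨⟨h₁, -⟩, h₂, h₃⟩
      exact ⟨h₁, by linarith, by linarith⟩
  have hR_sub_L : ∀ y, (R - L) y = (e - a) * (1 - y / d) := by
    intro y; simp only [Pi.sub_apply, L, R]; field_simp [hd.ne']; ring
  have hintegral : ∫ y in Ioo 0 d, (e - a) * (1 - y / d) = (e - a) * d / 2 := by
    rw [← integral_Ioc_eq_integral_Ioo, ← intervalIntegral.integral_of_le hd.le]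
    simp only [intervalIntegral.integral_const_mul, intervalIntegral.integral_sub,
      intervalIntegrable_const, intervalIntegral.intervalIntegrable_id,
      IntervalIntegrable.div_const, intervalIntegral.integral_const,
      intervalIntegral.integral_div, integral_id, sub_zero, smul_eq_mul, mul_one, ne_eq,
      OfNat.ofNat_ne_zero, not_false_eq_true, zero_pow]
    field_simp
    ring
  have hLR : ∀ y ∈ Ioo 0 d, L y ≤ R y := fun y hy => by
    rw [← sub_nonneg, ← Pi.sub_apply, hR_sub_L]
    exact mul_nonneg (sub_pos.2 hae).le (by rw [sub_nonneg, div_le_one hd]; exact hy.2.le)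
  calc volume (tri a e c d) = volume (interior (tri a e c d)) :=
        (measure_congr (interior_ae_eq_of_null_frontier
          ((convex_convexHull ℝ _).addHaar_frontier volume))).symm
    _ = volume (regionBetween L R (Ioo 0 d)) := by
        rw [hinterior, Measure.volume_eq_prod, Measure.measurePreserving_swap.measure_preimage
          (measurableSet_regionBetween (by fun_prop) (by fun_prop)
            measurableSet_Ioo).nullMeasurableSet]
    _ = ENNReal.ofReal ((e - a) * d / 2) := by
        rw [Measure.volume_eq_prod, volume_regionBetween_eq_integral
          (Continuous.integrableOn_Icc (by fun_prop) |>.mono_set Ioo_subset_Icc_self)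
          (Continuous.integrableOn_Icc (by fun_prop) |>.mono_set Ioo_subset_Icc_self)
          measurableSet_Ioo hLR]
        simp only [hR_sub_L, hintegral]

lemma interior_tri_subset_union {a' e' : ℝ} (ha : a < a') (ha' : a' < e') (he : e' < e)
    (hd : 0 < d) :
    interior (tri a e c d) ⊆ interior (tri a e' c d) ∪ interior (tri a' e c d) := by
  intro p hp
  obtain ⟨h₁, h₂, h₃⟩ := (mem_interior_tri (ha.trans (ha'.trans he)) hd).1 hp
  have hpd : p.2 < d := by nlinarith
  by_cases h : (e' - c) * p.2 < d * (e' - p.1)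
  · exact .inl ((mem_interior_tri (ha.trans ha') hd).2 ⟨h₁, h₂, h⟩)
  · refine .inr ((mem_interior_tri (ha'.trans he) hd).2 ⟨h₁, ?_, h₃⟩)
    nlinarith [mul_pos (sub_pos.2 ha') (sub_pos.2 hpd)]

end Triangle

section Counting

variable {B c d : ℤ}

/-- Row `y` of the parallelogram `0 < y < d`, `c y < d x ≤ c y + d B` consists of the `B` integers
following `⌊c y / d⌋`. -/
def parallelogramPoints (B c d : ℤ) : Finset (ℤ × ℤ) :=
  (Finset.Ioo 0 d ×ˢ Finset.Ioc 0 B).image fun q => (c * q.1 / d + q.2, q.1)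

lemma mem_parallelogramPoints (hd : 0 < d) {z : ℤ × ℤ} :
    z ∈ parallelogramPoints B c d ↔
      0 < z.2 ∧ z.2 < d ∧ c * z.2 < d * z.1 ∧ d * z.1 ≤ c * z.2 + d * B := by
  obtain ⟨x, y⟩ := z
  have hq := Int.mul_ediv_add_emod (c * y) d
  have hr := Int.emod_nonneg (c * y) hd.ne'
  have hr' := Int.emod_lt_of_pos (c * y) hd
  simp only [parallelogramPoints, Finset.mem_image, Finset.mem_product, Finset.mem_Ioo,
    Finset.mem_Ioc, Prod.exists, Prod.mk.injEq]
  constructor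
  · rintro ⟨y, k, ⟨⟨hy₀, hyd⟩, hk₀, hkB⟩, rfl, rfl⟩
    refine ⟨hy₀, hyd, ?_, ?_⟩ <;> nlinarith
  · rintro ⟨hy₀, hyd, hlt, hle⟩
    refine ⟨y, x - c * y / d, ⟨⟨hy₀, hyd⟩, ?_, ?_⟩, by ring, rfl⟩
    · by_contra! h
      nlinarith
    · by_contra! h
      nlinarith

lemma card_parallelogramPoints (hB : 0 ≤ B) (hd : 0 < d) :
    ((parallelogramPoints B c d).card : ℤ) = (d - 1) * B := by
  rw [parallelogramPoints, Finset.card_image_of_injective _ fun q q' h => ?_, Finset.card_product]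
  · push_cast
    rw [Int.card_Ioo_of_lt _ _ hd, Int.card_Ioc_of_le _ _ hB]
    ring
  · simp only [Prod.mk.injEq] at h
    obtain ⟨h₁, h₂⟩ := h
    rw [h₂] at h₁
    exact Prod.ext h₂ (by linarith)

def reflect (B c d : ℤ) (z : ℤ × ℤ) : ℤ × ℤ := (B + c - z.1, d - z.2)

lemma reflect_reflect (z : ℤ × ℤ) : reflect B c d (reflect B c d z) = z := by
  simp [reflect]

lemma reflect_mem_parallelogramPoints (hd : 0 < d)
    (hleft : ∀ z : ℤ × ℤ, 0 < z.2 → z.2 < d → c * z.2 ≠ d * z.1) {z : ℤ × ℤ}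
    (hz : z ∈ parallelogramPoints B c d) : reflect B c d z ∈ parallelogramPoints B c d := by
  obtain ⟨hy₀, hyd, hlt, hle⟩ := (mem_parallelogramPoints hd).1 hz
  have hne : d * z.1 ≠ c * z.2 + d * B := fun h => hleft (z.1 - B, z.2) hy₀ hyd (by linarith)
  rw [mem_parallelogramPoints hd]
  simp only [reflect]
  refine ⟨by linarith, by linarith, ?_, by linarith⟩
  linarith [lt_of_le_of_ne hle hne]

theorem two_mul_ncard_interior_points (hB : 0 < B) (hd : 0 < d)
    (hleft : ∀ z : ℤ × ℤ, 0 < z.2 → z.2 < d → c * z.2 ≠ d * z.1)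
    (hright : ∀ z : ℤ × ℤ, 0 < z.2 → z.2 < d → (B - c) * z.2 ≠ d * (B - z.1)) :
    2 * ({z : ℤ × ℤ | 0 < z.2 ∧ c * z.2 < d * z.1 ∧ (B - c) * z.2 < d * (B - z.1)}.ncard : ℤ) =
      (d - 1) * B := by
  classical
  -- `0 < ℓ z` says that `z` lies strictly left of the edge from `(B, 0)` to `(c, d)`
  set ℓ : ℤ × ℤ → ℤ := fun z => d * (B - z.1) - (B - c) * z.2
  have hℓ : ∀ z, ℓ (reflect B c d z) = - ℓ z := fun z => by simp only [ℓ, reflect]; ring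
  have hℓ₀ : ∀ z ∈ parallelogramPoints B c d, ℓ z ≠ 0 := fun z hz h => by
    obtain ⟨hy₀, hyd, -⟩ := (mem_parallelogramPoints hd).1 hz
    exact hright z hy₀ hyd (by simp only [ℓ] at h; linarith)
  have hA : {z : ℤ × ℤ | 0 < z.2 ∧ c * z.2 < d * z.1 ∧ (B - c) * z.2 < d * (B - z.1)} =
      ↑((parallelogramPoints B c d).filter fun z => 0 < ℓ z) := by
    ext z
    simp only [mem_ofPred_eq, Finset.coe_filter, mem_parallelogramPoints hd, ℓ]
    constructor
    · rintro ⟨hy₀, hlt, hr⟩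
      exact ⟨⟨hy₀, by nlinarith, hlt, by nlinarith⟩, by linarith⟩
    · rintro ⟨⟨hy₀, -, hlt, -⟩, hr⟩
      exact ⟨hy₀, hlt, by linarith⟩
  have hswap : ((parallelogramPoints B c d).filter fun z => ¬ 0 < ℓ z).card =
      ((parallelogramPoints B c d).filter fun z => 0 < ℓ z).card := by
    refine Finset.card_nbij' (reflect B c d) (reflect B c d) ?_ ?_ (fun z _ => reflect_reflect z)
      (fun z _ => reflect_reflect z)
    · intro z hz
      simp only [Finset.coe_filter, mem_ofPred_eq] at hz ⊢
      refine ⟨reflect_mem_parallelogramPoints hd hleft hz.1, ?_⟩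
      have := hℓ₀ z hz.1
      rw [hℓ]
      omega
    · intro z hz
      simp only [Finset.coe_filter, mem_ofPred_eq] at hz ⊢
      exact ⟨reflect_mem_parallelogramPoints hd hleft hz.1, by rw [hℓ]; omega⟩
  rw [hA, ncard_coe_finset, ← card_parallelogramPoints hB.le hd,
    ← Finset.card_filter_add_card_filter_not (s := parallelogramPoints B c d) (fun z => 0 < ℓ z),
    hswap]
  push_cast
  ring

end Counting

section LatticeTriangle

lemma triZ_eq (a e c d : ℤ) : triZ (a, 0) (e, 0) (c, d) = tri a e c d := by
  simp [triZ, tri, latticeEmbed]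

lemma isCompact_triZ (u v w : ℤ × ℤ) : IsCompact (triZ u v w) :=
  (((finite_singleton _).insert _).insert _).isCompact_convexHull ℝ

lemma finite_setOf_latticeEmbed_mem {K : Set (ℝ × ℝ)} (hK : IsCompact K) :
    {z : ℤ × ℤ | latticeEmbed z ∈ K}.Finite :=
  ((Int.isClosedEmbedding_coe_real.prodMap Int.isClosedEmbedding_coe_real).isCompact_preimage
    hK).finite_of_discrete

variable {a e c d : ℤ}

lemma latticeEmbed_mem_triZ (hae : a < e) (hd : 0 < d) {z : ℤ × ℤ} :
    latticeEmbed z ∈ triZ (a, 0) (e, 0) (c, d) ↔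
      0 ≤ z.2 ∧ (c - a) * z.2 ≤ d * (z.1 - a) ∧ (e - c) * z.2 ≤ d * (e - z.1) := by
  rw [triZ_eq, mem_tri (by exact_mod_cast hae) (by exact_mod_cast hd)]
  simp only [latticeEmbed]
  norm_cast

lemma latticeEmbed_mem_interior_triZ (hae : a < e) (hd : 0 < d) {z : ℤ × ℤ} :
    latticeEmbed z ∈ interior (triZ (a, 0) (e, 0) (c, d)) ↔
      0 < z.2 ∧ (c - a) * z.2 < d * (z.1 - a) ∧ (e - c) * z.2 < d * (e - z.1) := by
  rw [triZ_eq, mem_interior_tri (by exact_mod_cast hae) (by exact_mod_cast hd)]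
  simp only [latticeEmbed]
  norm_cast

lemma latticeEmbed_mem_frontier_triZ (hae : a < e) (hd : 0 < d) {z : ℤ × ℤ} :
    latticeEmbed z ∈ frontier (triZ (a, 0) (e, 0) (c, d)) ↔
      (0 ≤ z.2 ∧ (c - a) * z.2 ≤ d * (z.1 - a) ∧ (e - c) * z.2 ≤ d * (e - z.1)) ∧
        ¬(0 < z.2 ∧ (c - a) * z.2 < d * (z.1 - a) ∧ (e - c) * z.2 < d * (e - z.1)) := by
  rw [(isCompact_triZ _ _ _).isClosed.frontier_eq, mem_sdiff, latticeEmbed_mem_triZ hae hd,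
    latticeEmbed_mem_interior_triZ hae hd]

lemma latticeEmbed_mem_frontier_triZ_of_left_edge (hae : a < e) (hd : 0 < d) {z : ℤ × ℤ}
    (hy₀ : 0 ≤ z.2) (hyd : z.2 ≤ d) (h : (c - a) * z.2 = d * (z.1 - a)) :
    latticeEmbed z ∈ frontier (triZ (a, 0) (e, 0) (c, d)) := by
  rw [latticeEmbed_mem_frontier_triZ hae hd]
  refine ⟨⟨hy₀, h.le, ?_⟩, fun h' => h'.2.1.ne h⟩
  nlinarith [mul_le_mul_of_nonneg_left hyd (sub_pos.2 hae).le]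

lemma latticeEmbed_mem_frontier_triZ_of_right_edge (hae : a < e) (hd : 0 < d) {z : ℤ × ℤ}
    (hy₀ : 0 ≤ z.2) (hyd : z.2 ≤ d) (h : (e - c) * z.2 = d * (e - z.1)) :
    latticeEmbed z ∈ frontier (triZ (a, 0) (e, 0) (c, d)) := by
  rw [latticeEmbed_mem_frontier_triZ hae hd]
  refine ⟨⟨hy₀, ?_, h.le⟩, fun h' => h'.2.2.ne h⟩
  nlinarith [mul_le_mul_of_nonneg_left hyd (sub_pos.2 hae).le]

lemma five_le_ncard_frontier_triZ (hae : a + 3 ≤ e) (hd : 0 < d) :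
    5 ≤ {z : ℤ × ℤ | latticeEmbed z ∈ frontier (triZ (a, 0) (e, 0) (c, d))}.ncard := by
  classical
  let T : Finset (ℤ × ℤ) := insert (c, d) (Finset.Icc a (a + 3) ×ˢ {0})
  have hT : T.card = 5 := by
    rw [Finset.card_insert_of_notMem (by simp; omega), Finset.card_product, Int.card_Icc]
    simp only [Finset.card_singleton]
    omega
  have hfin := finite_setOf_latticeEmbed_mem
    ((isCompact_triZ (a, 0) (e, 0) (c, d)).of_isClosed_subset isClosed_frontier
      (isCompact_triZ _ _ _).isClosed.frontier_subset)
  refine hT ▸ ncard_coe_finset T ▸ ncard_le_ncard (fun z hz => ?_) hfin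
  rw [mem_ofPred_eq, latticeEmbed_mem_frontier_triZ (by omega) hd]
  simp only [T, Finset.coe_insert, Finset.coe_product, Finset.coe_Icc, Finset.coe_singleton,
    mem_insert_iff, mem_prod, mem_Icc, mem_singleton_iff] at hz
  rcases hz with rfl | ⟨⟨hx₁, hx₂⟩, hy⟩
  · refine ⟨⟨hd.le, ?_, ?_⟩, fun h => h.2.1.ne ?_⟩ <;> linarith
  · refine ⟨⟨hy.ge, ?_, ?_⟩, fun h => h.1.ne' hy⟩ <;> rw [hy] <;> nlinarith

lemma two_mul_volume_triZ (hae : a < e) (hd : 0 < d) :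
    2 * (volume (triZ (a, 0) (e, 0) (c, d))).toReal = (((e - a) * d : ℤ) : ℝ) := by
  have hae' : (a : ℝ) < e := by exact_mod_cast hae
  have hd' : (0 : ℝ) < d := by exact_mod_cast hd
  rw [triZ_eq, volume_tri hae' hd', ENNReal.toReal_ofReal (by nlinarith)]
  push_cast
  ring

lemma interior_triZ_subset_union {a' e' : ℤ} (ha : a < a') (ha' : a' < e') (he : e' < e)
    (hd : 0 < d) :
    interior (triZ (a, 0) (e, 0) (c, d)) ⊆
      interior (triZ (a, 0) (e', 0) (c, d)) ∪ interior (triZ (a', 0) (e, 0) (c, d)) := by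
  simp only [triZ_eq]
  exact interior_tri_subset_union (by exact_mod_cast ha) (by exact_mod_cast ha')
    (by exact_mod_cast he) (by exact_mod_cast hd)

theorem two_mul_ncard_interior_triZ (he : 0 < e) (hd : 0 < d)
    (hedges : ∀ z : ℤ × ℤ, latticeEmbed z ∈ frontier (triZ (0, 0) (e, 0) (c, d)) →
      z.2 = 0 ∨ z.2 = d) :
    2 * ({z : ℤ × ℤ | latticeEmbed z ∈ interior (triZ (0, 0) (e, 0) (c, d))}.ncard : ℤ) =
      (d - 1) * e := by
  have hset : {z : ℤ × ℤ | latticeEmbed z ∈ interior (triZ (0, 0) (e, 0) (c, d))} =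
      {z | 0 < z.2 ∧ c * z.2 < d * z.1 ∧ (e - c) * z.2 < d * (e - z.1)} := by
    ext z
    simpa using latticeEmbed_mem_interior_triZ he hd
  rw [hset]
  refine two_mul_ncard_interior_points he hd (fun z hy₀ hyd h => ?_) (fun z hy₀ hyd h => ?_)
  · have := hedges z (latticeEmbed_mem_frontier_triZ_of_left_edge he hd hy₀.le hyd.le
      (by simpa using h))
    omega
  · have := hedges z (latticeEmbed_mem_frontier_triZ_of_right_edge he hd hy₀.le hyd.le h)
    omega

end LatticeTriangle

/-- let `P` be the lattice triangle with vertices `(0,0)`, `(b-2,0)`,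
`(c,d)` (`d > 0`), whose boundary lattice points are exactly `(0,0), …, (b-2,0)` and
`(c,d)`, with `b ≥ 6` boundary points and `i ≥ 3` interior points.  Then
`(b-2)d = 2i + b - 2` (so `d = 2i/(b-2) + 1` is an integer) with `d ≥ 2`, the two
subtriangles `P' = ((0,0),(b-3,0),(c,d))` and `P'' = ((1,0),(b-2,0),(c,d))` both have
normalized area `(b-3)d ≥ 7`, and at least one of them has an interior lattice point
and at least 5 boundary lattice points. -/
theorem stmt18 (b i : ℕ) (hb : 6 ≤ b) (hi : 3 ≤ i) (c d : ℤ) (hd : 0 < d)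
    (hbd : {z : ℤ × ℤ | latticeEmbed z ∈ frontier (triZ (0, 0) ((b : ℤ) - 2, 0) (c, d))} =
      {z : ℤ × ℤ | z.2 = 0 ∧ 0 ≤ z.1 ∧ z.1 ≤ (b : ℤ) - 2} ∪ {(c, d)})
    (hint : {z : ℤ × ℤ | latticeEmbed z ∈ interior (triZ (0, 0) ((b : ℤ) - 2, 0) (c, d))}.ncard = i) :
    ((b : ℤ) - 2) * d = 2 * (i : ℤ) + (b : ℤ) - 2 ∧ 2 ≤ d ∧
    2 * (MeasureTheory.volume (triZ (0, 0) ((b : ℤ) - 3, 0) (c, d))).toReal =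
      ((((b : ℤ) - 3) * d : ℤ) : ℝ) ∧
    2 * (MeasureTheory.volume (triZ (1, 0) ((b : ℤ) - 2, 0) (c, d))).toReal =
      ((((b : ℤ) - 3) * d : ℤ) : ℝ) ∧
    7 ≤ ((b : ℤ) - 3) * d ∧
    (((∃ z : ℤ × ℤ, latticeEmbed z ∈ interior (triZ (0, 0) ((b : ℤ) - 3, 0) (c, d))) ∧
        5 ≤ {z : ℤ × ℤ | latticeEmbed z ∈ frontier (triZ (0, 0) ((b : ℤ) - 3, 0) (c, d))}.ncard) ∨
      ((∃ z : ℤ × ℤ, latticeEmbed z ∈ interior (triZ (1, 0) ((b : ℤ) - 2, 0) (c, d))) ∧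
        5 ≤ {z : ℤ × ℤ | latticeEmbed z ∈ frontier (triZ (1, 0) ((b : ℤ) - 2, 0) (c, d))}.ncard)) := by
  have hb' : (6 : ℤ) ≤ b := by exact_mod_cast hb
  have hcount := two_mul_ncard_interior_triZ (c := c) (by omega : (0 : ℤ) < b - 2) hd fun z hz => by
    rcases (Set.ext_iff.1 hbd z).1 hz with ⟨hy, -⟩ | hz
    exacts [.inl hy, .inr (by rw [mem_singleton_iff.1 hz])]
  rw [hint] at hcount
  have hd2 : 2 ≤ d := by nlinarith
  refine ⟨by linarith, hd2, by rw [two_mul_volume_triZ (by omega) hd, sub_zero],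
    by rw [two_mul_volume_triZ (by omega) hd]; push_cast; ring, by nlinarith, ?_⟩
  obtain ⟨z, hz⟩ : {z : ℤ × ℤ |
      latticeEmbed z ∈ interior (triZ (0, 0) ((b : ℤ) - 2, 0) (c, d))}.Nonempty :=
    nonempty_of_ncard_ne_zero (by omega)
  rcases interior_triZ_subset_union (a' := 1) (e' := b - 3) (by norm_num) (by omega) (by omega)
    hd hz with h | h
  exacts [.inl ⟨⟨z, h⟩, five_le_ncard_frontier_triZ (by omega) hd⟩,
    .inr ⟨⟨z, h⟩, five_le_ncard_frontier_triZ (by omega) hd⟩]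
end
end
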